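/- arXiv:2407.12110 — 8 statements merged into one kernel-verified Lean document; each statement's English description precedes it below -/
import Mathlib

section
/- Let D be a (2k)-wise uniform distribution on {-1,1}^n, i.e., any 2k coordinates of D are uniformly distributed. Then for every positive integer t, Pr[|∑_{i=1}^n D_i| ≥ t] ≤ √2 · (2kn/(e·t²))^k. -/
/-- The ±1 value of a boolean bit. -/
noncomputable def pmSign (b : Bool) : ℝ := if b then 1 else -1

open Finset

namespace TailAux

/-- Double factorial (2k-1)!! as a product. -/
def df (k : ℕ) : ℕ := ∏ j ∈ Finset.range k, (2 * j + 1)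

lemma df_pos (k : ℕ) : 0 < df k :=
  Finset.prod_pos (fun j _ => Nat.succ_pos _)

lemma two_mul_factorial (m : ℕ) : (2 * m).factorial = 2 ^ m * m.factorial * df m := by
  induction m with
  | zero => simp [df]
  | succ m ih =>
    have h : 2 * (m + 1) = (2 * m + 1) + 1 := by ring
    rw [h, Nat.factorial_succ, Nat.factorial_succ, df, Finset.prod_range_succ, ← df, ih,
      Nat.factorial_succ]
    ring

lemma choose_df {k r : ℕ} (h : r ≤ k) :
    Nat.choose (2 * k) (2 * r) * df r * df (k - r) = Nat.choose k r * df k := by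
  have h2 : 2 * r ≤ 2 * k := by omega
  have key : Nat.choose (2 * k) (2 * r) * df r * df (k - r) * (2 ^ k * r.factorial * (k - r).factorial)
      = Nat.choose k r * df k * (2 ^ k * r.factorial * (k - r).factorial) := by
    have e1 : Nat.choose (2 * k) (2 * r) * (2 * r).factorial * (2 * k - 2 * r).factorial
        = (2 * k).factorial := Nat.choose_mul_factorial_mul_factorial h2
    have e2 : Nat.choose k r * r.factorial * (k - r).factorial = k.factorial :=
      Nat.choose_mul_factorial_mul_factorial h
    have e3 : 2 * k - 2 * r = 2 * (k - r) := by omega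
    rw [e3] at e1
    have l1 := two_mul_factorial r
    have l2 := two_mul_factorial (k - r)
    have l3 := two_mul_factorial k
    have e4 : 2 ^ k = 2 ^ r * 2 ^ (k - r) := by rw [← pow_add]; congr 1; omega
    calc Nat.choose (2 * k) (2 * r) * df r * df (k - r) * (2 ^ k * r.factorial * (k - r).factorial)
        = Nat.choose (2 * k) (2 * r) * (2 ^ r * r.factorial * df r)
          * (2 ^ (k - r) * (k - r).factorial * df (k - r)) := by rw [e4]; ring
      _ = Nat.choose (2 * k) (2 * r) * (2 * r).factorial * (2 * (k - r)).factorial := by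
          rw [l1, l2]
      _ = (2 * k).factorial := e1
      _ = Nat.choose k r * r.factorial * (k - r).factorial * (2 ^ k * df k) := by
          rw [← e2] at l3; rw [l3]; ring
      _ = Nat.choose k r * df k * (2 ^ k * r.factorial * (k - r).factorial) := by ring
  have hpos : 0 < 2 ^ k * r.factorial * (k - r).factorial := by positivity
  exact Nat.eq_of_mul_eq_mul_right hpos key

lemma choose_df_le {k r : ℕ} (h : r ≤ k) :
    Nat.choose (2 * k) (2 * r) * df r ≤ Nat.choose k r * df k := by
  calc Nat.choose (2 * k) (2 * r) * df r
      ≤ Nat.choose (2 * k) (2 * r) * df r * df (k - r) :=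
        Nat.le_mul_of_pos_right _ (df_pos _)
    _ = Nat.choose k r * df k := choose_df h

/-! ### pmSign facts -/

lemma pmSign_sq (b : Bool) : pmSign b ^ 2 = 1 := by
  cases b <;> simp [pmSign]

lemma abs_pmSign (b : Bool) : |pmSign b| = 1 := by
  cases b <;> simp [pmSign]

lemma pmSign_pow (b : Bool) (c : ℕ) :
    pmSign b ^ c = if Even c then 1 else pmSign b := by
  rcases Nat.even_or_odd c with hc | hc
  · obtain ⟨m, hm⟩ := hc
    rw [if_pos ⟨m, hm⟩, hm, ← two_mul, pow_mul, pmSign_sq, one_pow]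
  · have hne : ¬ Even c := Nat.not_even_iff_odd.mpr hc
    obtain ⟨m, hm⟩ := hc
    rw [if_neg hne, hm, pow_add, pow_mul, pmSign_sq, one_pow, pow_one, one_mul]

/-! ### The unnormalized 2k-th moment of the uniform distribution -/

noncomputable def Msum (k n : ℕ) : ℝ :=
  ∑ x : Fin n → Bool, (∑ i, pmSign (x i)) ^ (2 * k)

lemma sum_range_even (k : ℕ) (g : ℕ → ℝ) (hodd : ∀ j, ¬ Even j → g j = 0) :
    ∑ j ∈ Finset.range (2 * k + 1), g j = ∑ r ∈ Finset.range (k + 1), g (2 * r) := by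
  induction k with
  | zero => simp
  | succ k ih =>
    have h : 2 * (k + 1) + 1 = (2 * k + 1) + 1 + 1 := by ring
    rw [h, Finset.sum_range_succ, Finset.sum_range_succ, ih]
    rw [hodd (2 * k + 1) (by simp [Nat.even_add_one, parity_simps])]
    have h2 : 2 * k + 1 + 1 = 2 * (k + 1) := by ring
    rw [h2, add_zero]
    exact (Finset.sum_range_succ (fun r => g (2 * r)) (k + 1)).symm

lemma pow_add_pow (X : ℝ) (k : ℕ) :
    (X + 1) ^ (2 * k) + (X - 1) ^ (2 * k)
      = 2 * ∑ r ∈ Finset.range (k + 1), (Nat.choose (2 * k) (2 * r) : ℝ) * X ^ (2 * r) := by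
  have h1 : (X + 1) ^ (2 * k) = ∑ j ∈ Finset.range (2 * k + 1),
      X ^ j * (1 : ℝ) ^ (2 * k - j) * (Nat.choose (2 * k) j : ℝ) := add_pow X 1 (2 * k)
  have h2 : (X - 1) ^ (2 * k) = ∑ j ∈ Finset.range (2 * k + 1),
      X ^ j * (-1 : ℝ) ^ (2 * k - j) * (Nat.choose (2 * k) j : ℝ) := by
    rw [sub_eq_add_neg]; exact add_pow X (-1) (2 * k)
  rw [h1, h2, ← Finset.sum_add_distrib]
  have key : ∀ j ∈ Finset.range (2 * k + 1),
      X ^ j * (1 : ℝ) ^ (2 * k - j) * (Nat.choose (2 * k) j : ℝ)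
        + X ^ j * (-1 : ℝ) ^ (2 * k - j) * (Nat.choose (2 * k) j : ℝ)
      = (if Even j then (2:ℝ) * ((Nat.choose (2 * k) j : ℝ) * X ^ j) else 0) := by
    intro j hj
    have hj' : j ≤ 2 * k := by simpa using Nat.lt_succ_iff.mp (Finset.mem_range.mp hj)
    by_cases hje : Even j
    · have : Even (2 * k - j) := by
        rcases hje with ⟨m, hm⟩
        exact ⟨k - m, by omega⟩
      rw [if_pos hje, this.neg_one_pow]
      ring
    · have : ¬ Even (2 * k - j) := by
        intro ⟨m, hm⟩
        exact hje ⟨k - m, by omega⟩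
      rw [if_neg hje, (Nat.not_even_iff_odd.mp this).neg_one_pow]
      ring
  rw [Finset.sum_congr rfl key]
  rw [sum_range_even k _ (fun j hj => if_neg hj)]
  rw [Finset.mul_sum]
  refine Finset.sum_congr rfl fun r _ => ?_
  rw [if_pos ⟨r, two_mul r⟩]

lemma Msum_succ (k n : ℕ) :
    Msum k (n + 1) = 2 * ∑ r ∈ Finset.range (k + 1),
      (Nat.choose (2 * k) (2 * r) : ℝ) * Msum r n := by
  have step1 : Msum k (n + 1)
      = ∑ p : Bool × (Fin n → Bool), (pmSign p.1 + ∑ i, pmSign (p.2 i)) ^ (2 * k) := by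
    rw [Msum]
    refine (Fintype.sum_equiv (Fin.consEquiv fun _ => Bool) _ _ fun p => ?_).symm
    congr 1
    simp [Fin.consEquiv, Fin.sum_univ_succ]
  rw [step1, Fintype.sum_prod_type, Fintype.sum_bool]
  have htrue : ∀ y : Fin n → Bool,
      (pmSign true + ∑ i, pmSign (y i)) ^ (2 * k)
        = ((∑ i, pmSign (y i)) + 1) ^ (2 * k) := by
    intro y; rw [pmSign]; norm_num [add_comm]
  have hfalse : ∀ y : Fin n → Bool,
      (pmSign false + ∑ i, pmSign (y i)) ^ (2 * k)
        = ((∑ i, pmSign (y i)) - 1) ^ (2 * k) := by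
    intro y; rw [pmSign]; norm_num [sub_eq_add_neg, add_comm]
  rw [Finset.sum_congr rfl (fun y _ => htrue y), Finset.sum_congr rfl (fun y _ => hfalse y),
    ← Finset.sum_add_distrib]
  rw [Finset.sum_congr rfl (fun y _ => pow_add_pow (∑ i, pmSign (y i)) k)]
  rw [← Finset.mul_sum, Finset.sum_comm]
  congr 1
  refine Finset.sum_congr rfl fun r _ => ?_
  rw [← Finset.mul_sum, Msum]

lemma Msum_le (n k : ℕ) : Msum k n ≤ 2 ^ n * df k * (n : ℝ) ^ k := by
  induction n generalizing k with
  | zero =>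
    have h0 : Msum k 0 = (0 : ℝ) ^ (2 * k) := by
      rw [Msum]
      rw [Finset.sum_congr rfl (fun x _ => by rw [Finset.univ_eq_empty, Finset.sum_empty])]
      simp
    rw [h0]
    rcases Nat.eq_zero_or_pos k with rfl | hk
    · simp [df]
    · rw [zero_pow (by omega)]
      have : ((0:ℕ) : ℝ) ^ k = 0 := by rw [Nat.cast_zero, zero_pow (by omega)]
      rw [Nat.cast_zero]
      positivity
  | succ n ih =>
    rw [Msum_succ]
    have hb : ∀ r ∈ Finset.range (k + 1),
        (Nat.choose (2 * k) (2 * r) : ℝ) * Msum r n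
          ≤ 2 ^ n * ((Nat.choose k r : ℝ) * df k) * (n : ℝ) ^ r := by
      intro r hr
      have hrk : r ≤ k := Nat.lt_succ_iff.mp (Finset.mem_range.mp hr)
      have h1 : (Nat.choose (2 * k) (2 * r) : ℝ) * Msum r n
          ≤ (Nat.choose (2 * k) (2 * r) : ℝ) * (2 ^ n * df r * (n : ℝ) ^ r) :=
        mul_le_mul_of_nonneg_left (ih r) (by positivity)
      refine h1.trans ?_
      have h2 : (Nat.choose (2 * k) (2 * r) : ℝ) * df r ≤ (Nat.choose k r : ℝ) * df k := by
        exact_mod_cast Nat.cast_le.mpr (choose_df_le hrk)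
      calc (Nat.choose (2 * k) (2 * r) : ℝ) * (2 ^ n * df r * (n : ℝ) ^ r)
          = ((Nat.choose (2 * k) (2 * r) : ℝ) * df r) * (2 ^ n * (n : ℝ) ^ r) := by ring
        _ ≤ ((Nat.choose k r : ℝ) * df k) * (2 ^ n * (n : ℝ) ^ r) :=
            mul_le_mul_of_nonneg_right h2 (by positivity)
        _ = 2 ^ n * ((Nat.choose k r : ℝ) * df k) * (n : ℝ) ^ r := by ring
    have h3 : Msum k (n + 1) ≤ 2 * ∑ r ∈ Finset.range (k + 1),
        2 ^ n * ((Nat.choose k r : ℝ) * df k) * (n : ℝ) ^ r := by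
      rw [Msum_succ]
      exact mul_le_mul_of_nonneg_left (Finset.sum_le_sum hb) (by norm_num)
    rw [← Msum_succ]
    refine h3.trans (le_of_eq ?_)
    have hbin : ((n : ℝ) + 1) ^ k
        = ∑ r ∈ Finset.range (k + 1), (n : ℝ) ^ r * 1 ^ (k - r) * (Nat.choose k r : ℝ) :=
      add_pow (n : ℝ) 1 k
    push_cast
    rw [hbin, Finset.mul_sum, Finset.mul_sum]
    refine Finset.sum_congr rfl fun r _ => ?_
    ring

/-! ### Stirling bound on the double factorial -/

lemma df_le (k : ℕ) (hk : 0 < k) :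
    (df k : ℝ) ≤ Real.sqrt 2 * (2 * k / Real.exp 1) ^ k := by
  have he : (0:ℝ) < Real.exp 1 := Real.exp_pos 1
  have hk' : (0:ℝ) < k := by exact_mod_cast hk
  have hS : Stirling.stirlingSeq (2 * k) ≤ Stirling.stirlingSeq k := by
    obtain ⟨m, rfl⟩ : ∃ m, k = m + 1 := ⟨k - 1, by omega⟩
    have h := Stirling.stirlingSeq'_antitone (show m ≤ 2 * (m + 1) - 1 by omega)
    have e1 : 2 * (m + 1) - 1 + 1 = 2 * (m + 1) := by omega
    simpa [Function.comp, e1] using h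
  have hfact : ∀ m : ℕ, 0 < m → (m.factorial : ℝ)
      = Stirling.stirlingSeq m * (Real.sqrt (2 * m) * ((m : ℝ) / Real.exp 1) ^ m) := by
    intro m hm
    have hm' : (0:ℝ) < m := by exact_mod_cast hm
    have hd : (0:ℝ) < Real.sqrt (2 * m) * ((m : ℝ) / Real.exp 1) ^ m := by positivity
    rw [Stirling.stirlingSeq, div_mul_cancel₀ _ (ne_of_gt hd)]
  have hk2 : (0:ℕ) < 2 * k := by omega
  have h2k := hfact (2 * k) hk2
  have h1k := hfact k hk
  have key : (df k : ℝ) * (2 ^ k * k.factorial) = ((2 * k).factorial : ℝ) := by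
    have := two_mul_factorial k
    push_cast [this]
    ring
  have hD : Real.sqrt 2 * (2 * k / Real.exp 1) ^ k * (2 ^ k * (k.factorial : ℝ))
      = Stirling.stirlingSeq k * (Real.sqrt (2 * (2 * k : ℕ)) * (((2 * k : ℕ) : ℝ) / Real.exp 1) ^ (2 * k)) := by
    have hsqrt : Real.sqrt 2 * Real.sqrt (2 * k) = Real.sqrt (2 * (2 * k : ℕ)) := by
      rw [← Real.sqrt_mul (by norm_num : (0:ℝ) ≤ 2)]
      congr 1
      push_cast
      ring
    have hpow : ((2 : ℝ) * k / Real.exp 1) ^ k * (2 ^ k * ((k : ℝ) / Real.exp 1) ^ k)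
        = (((2 * k : ℕ) : ℝ) / Real.exp 1) ^ (2 * k) := by
      push_cast
      rw [pow_mul, ← mul_pow, ← mul_pow]
      congr 1
      ring
    calc Real.sqrt 2 * (2 * (k:ℝ) / Real.exp 1) ^ k * (2 ^ k * (k.factorial : ℝ))
        = (Real.sqrt 2 * Real.sqrt (2 * k)) * (Stirling.stirlingSeq k *
            ((2 * (k:ℝ) / Real.exp 1) ^ k * (2 ^ k * ((k : ℝ) / Real.exp 1) ^ k))) := by
          rw [h1k]; ring
      _ = _ := by rw [hsqrt, hpow]; ring
  have hDpos : (0:ℝ) < Real.sqrt (2 * (2 * k : ℕ)) * (((2 * k : ℕ) : ℝ) / Real.exp 1) ^ (2 * k) := by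
    have : (0:ℝ) < ((2 * k : ℕ) : ℝ) := by exact_mod_cast hk2
    positivity
  have hfinal : (df k : ℝ) * (2 ^ k * k.factorial)
      ≤ Real.sqrt 2 * (2 * k / Real.exp 1) ^ k * (2 ^ k * (k.factorial : ℝ)) := by
    rw [key, hD, h2k]
    exact mul_le_mul_of_nonneg_right hS (le_of_lt hDpos)
  have hpos2 : (0:ℝ) < 2 ^ k * (k.factorial : ℝ) := by positivity
  exact le_of_mul_le_mul_right hfinal hpos2

/-! ### Fourier-style expansion -/

def oddSet {m n : ℕ} (f : Fin m → Fin n) : Finset (Fin n) :=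
  Finset.univ.filter fun i => ¬ Even ((Finset.univ.filter fun j => f j = i).card)

lemma prod_pmSign_eq {m n : ℕ} (f : Fin m → Fin n) (x : Fin n → Bool) :
    ∏ j, pmSign (x (f j)) = ∏ i ∈ oddSet f, pmSign (x i) := by
  classical
  rw [oddSet, Finset.prod_filter]
  rw [← Finset.prod_fiberwise Finset.univ f (fun j => pmSign (x (f j)))]
  refine Finset.prod_congr rfl fun i _ => ?_
  have h1 : ∏ j ∈ Finset.univ.filter (fun j => f j = i), pmSign (x (f j))
      = ∏ j ∈ Finset.univ.filter (fun j => f j = i), pmSign (x i) :=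
    Finset.prod_congr rfl fun j hj => by rw [(Finset.mem_filter.mp hj).2]
  rw [h1, Finset.prod_const, pmSign_pow, ite_not]

lemma card_oddSet_le {m n : ℕ} (f : Fin m → Fin n) : (oddSet f).card ≤ m := by
  classical
  have htotal : ∑ i : Fin n, (Finset.univ.filter fun j => f j = i).card = m := by
    rw [← Finset.card_eq_sum_card_fiberwise (fun x _ => Finset.mem_univ (f x))]
    simp
  calc (oddSet f).card = ∑ _i ∈ oddSet f, 1 := by rw [Finset.sum_const, smul_eq_mul, mul_one]
    _ ≤ ∑ i ∈ oddSet f, (Finset.univ.filter fun j => f j = i).card := by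
        refine Finset.sum_le_sum fun i hi => ?_
        have := (Finset.mem_filter.mp hi).2
        have hne : (Finset.univ.filter fun j => f j = i).card ≠ 0 := by
          intro h0; exact this (h0 ▸ Even.zero)
        omega
    _ ≤ ∑ i : Fin n, (Finset.univ.filter fun j => f j = i).card :=
        Finset.sum_le_sum_of_subset (Finset.filter_subset _ _)
    _ = m := htotal

lemma moment_eq {n k : ℕ} (q : (Fin n → Bool) → ℝ) (hq1 : ∑ x, q x = 1)
    (hq : ∀ S : Finset (Fin n), 0 < S.card → S.card ≤ 2 * k →
      ∑ x, q x * ∏ i ∈ S, pmSign (x i) = 0) :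
    ∑ x, q x * (∑ i, pmSign (x i)) ^ (2 * k)
      = ∑ f : Fin (2 * k) → Fin n, (if oddSet f = ∅ then (1:ℝ) else 0) := by
  classical
  have hexp : ∀ x : Fin n → Bool, (∑ i, pmSign (x i)) ^ (2 * k)
      = ∑ f : Fin (2 * k) → Fin n, ∏ i ∈ oddSet f, pmSign (x i) := by
    intro x
    rw [Finset.sum_pow' Finset.univ (fun i => pmSign (x i)) (2 * k), Fintype.piFinset_univ]
    exact Finset.sum_congr rfl fun f _ => prod_pmSign_eq f x
  calc ∑ x, q x * (∑ i, pmSign (x i)) ^ (2 * k)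
      = ∑ x, ∑ f : Fin (2 * k) → Fin n, q x * ∏ i ∈ oddSet f, pmSign (x i) := by
        refine Finset.sum_congr rfl fun x _ => ?_
        rw [hexp x, Finset.mul_sum]
    _ = ∑ f : Fin (2 * k) → Fin n, ∑ x, q x * ∏ i ∈ oddSet f, pmSign (x i) :=
        Finset.sum_comm
    _ = _ := by
        refine Finset.sum_congr rfl fun f _ => ?_
        by_cases hf : oddSet f = ∅
        · simp [hf, hq1]
        · rw [if_neg hf]
          refine hq (oddSet f) ?_ (card_oddSet_le f)
          exact Finset.card_pos.mpr (Finset.nonempty_iff_ne_empty.mpr hf)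

lemma uniform_sum (n : ℕ) : ∑ _x : Fin n → Bool, ((2:ℝ) ^ n)⁻¹ = 1 := by
  rw [Finset.sum_const, Finset.card_univ, nsmul_eq_mul]
  have hcard : (Fintype.card (Fin n → Bool) : ℝ) = 2 ^ n := by
    rw [Fintype.card_fun]
    push_cast
    simp
  rw [hcard, mul_inv_cancel₀ (by positivity)]

lemma uniform_uniform (n : ℕ) (S : Finset (Fin n)) (hS : 0 < S.card) :
    ∑ x : Fin n → Bool, ((2:ℝ) ^ n)⁻¹ * ∏ i ∈ S, pmSign (x i) = 0 := by
  classical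
  have hz : ∑ x : Fin n → Bool, ∏ i ∈ S, pmSign (x i) = 0 := by
    have hrw : ∀ x : Fin n → Bool, ∏ i ∈ S, pmSign (x i)
        = ∏ i : Fin n, (if i ∈ S then pmSign (x i) else 1) := by
      intro x
      rw [← Finset.prod_filter, Finset.filter_univ_mem]
    rw [Finset.sum_congr rfl (fun x _ => hrw x), ← Fintype.piFinset_univ,
      Finset.sum_prod_piFinset Finset.univ (fun i b => if i ∈ S then pmSign b else 1)]
    obtain ⟨i0, hi0⟩ := Finset.card_pos.mp hS
    refine Finset.prod_eq_zero (Finset.mem_univ i0) ?_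
    rw [Fintype.sum_bool, if_pos hi0, if_pos hi0]
    simp [pmSign]
  rw [← Finset.mul_sum, hz, mul_zero]

end TailAux

/-- Tail bound for (2k)-wise uniform distributions on {-1,1}^n. -/
theorem stmt_0 (n k : ℕ) (hk : 0 < k) (p : (Fin n → Bool) → ℝ)
    (hnonneg : ∀ x, 0 ≤ p x) (hsum : ∑ x, p x = 1)
    (huniform : ∀ S : Finset (Fin n), 0 < S.card → S.card ≤ 2 * k →
      ∑ x, p x * ∏ i ∈ S, pmSign (x i) = 0)
    (t : ℕ) (ht : 0 < t) :
    ∑ x ∈ Finset.univ.filter (fun x => (t : ℝ) ≤ |∑ i, pmSign (x i)|), p x ≤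
      Real.sqrt 2 * ((2 * k * n) / (Real.exp 1 * t ^ 2)) ^ k := by
  classical
  have ht' : (0:ℝ) < t := by exact_mod_cast ht
  have heven : Even (2 * k) := even_two_mul k
  have hpownn : ∀ x : Fin n → Bool, (0:ℝ) ≤ (∑ i, pmSign (x i)) ^ (2 * k) := by
    intro x
    rw [← heven.pow_abs]
    positivity
  -- Markov's inequality
  have markov : (∑ x ∈ Finset.univ.filter (fun x => (t : ℝ) ≤ |∑ i, pmSign (x i)|), p x)
      * (t:ℝ) ^ (2 * k) ≤ ∑ x, p x * (∑ i, pmSign (x i)) ^ (2 * k) := by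
    rw [Finset.sum_mul]
    have h1 : ∀ x ∈ Finset.univ.filter (fun x => (t : ℝ) ≤ |∑ i, pmSign (x i)|),
        p x * (t:ℝ) ^ (2 * k) ≤ p x * (∑ i, pmSign (x i)) ^ (2 * k) := by
      intro x hx
      have hxt : (t:ℝ) ≤ |∑ i, pmSign (x i)| := (Finset.mem_filter.mp hx).2
      have h2 : (t:ℝ) ^ (2 * k) ≤ |∑ i, pmSign (x i)| ^ (2 * k) :=
        pow_le_pow_left₀ (le_of_lt ht') hxt _
      rw [heven.pow_abs] at h2
      exact mul_le_mul_of_nonneg_left h2 (hnonneg x)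
    refine (Finset.sum_le_sum h1).trans ?_
    exact Finset.sum_le_sum_of_subset_of_nonneg (Finset.filter_subset _ _)
      (fun x _ _ => mul_nonneg (hnonneg x) (hpownn x))
  -- The 2k-th moment equals the uniform one
  have hUuni : ∀ S : Finset (Fin n), 0 < S.card → S.card ≤ 2 * k →
      ∑ x : Fin n → Bool, ((2:ℝ) ^ n)⁻¹ * ∏ i ∈ S, pmSign (x i) = 0 :=
    fun S h1 _ => TailAux.uniform_uniform n S h1
  have hE : ∑ x, p x * (∑ i, pmSign (x i)) ^ (2 * k)
      = ∑ x : Fin n → Bool, ((2:ℝ) ^ n)⁻¹ * (∑ i, pmSign (x i)) ^ (2 * k) := by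
    rw [TailAux.moment_eq p hsum huniform,
      TailAux.moment_eq (fun _ => ((2:ℝ) ^ n)⁻¹) (TailAux.uniform_sum n) hUuni]
  have hEU : ∑ x : Fin n → Bool, ((2:ℝ) ^ n)⁻¹ * (∑ i, pmSign (x i)) ^ (2 * k)
      = ((2:ℝ) ^ n)⁻¹ * TailAux.Msum k n := by
    rw [← Finset.mul_sum, TailAux.Msum]
  have hMB : ((2:ℝ) ^ n)⁻¹ * TailAux.Msum k n ≤ (TailAux.df k : ℝ) * (n:ℝ) ^ k := by
    have h := TailAux.Msum_le n k
    calc ((2:ℝ) ^ n)⁻¹ * TailAux.Msum k n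
        ≤ ((2:ℝ) ^ n)⁻¹ * (2 ^ n * TailAux.df k * (n : ℝ) ^ k) :=
          mul_le_mul_of_nonneg_left h (by positivity)
      _ = (TailAux.df k : ℝ) * (n:ℝ) ^ k := by
          field_simp
  have hT : ∑ x ∈ Finset.univ.filter (fun x => (t : ℝ) ≤ |∑ i, pmSign (x i)|), p x
      ≤ ((TailAux.df k : ℝ) * (n:ℝ) ^ k) / (t:ℝ) ^ (2 * k) := by
    rw [le_div_iff₀ (by positivity)]
    refine markov.trans ?_
    rw [hE, hEU]
    exact hMB
  refine hT.trans ?_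
  have hdf := TailAux.df_le k hk
  have step : ((TailAux.df k : ℝ) * (n:ℝ) ^ k) / (t:ℝ) ^ (2 * k)
      ≤ (Real.sqrt 2 * (2 * (k:ℝ) / Real.exp 1) ^ k * (n:ℝ) ^ k) / (t:ℝ) ^ (2 * k) := by
    gcongr
  refine step.trans (le_of_eq ?_)
  have he : (0:ℝ) < Real.exp 1 := Real.exp_pos 1
  have ht0 : ((t:ℝ)) ≠ 0 := ne_of_gt ht'
  simp only [div_pow, mul_pow, ← pow_mul]
  field_simp
end

section
/- Let B = ∑_{i=1}^n U_i where U is uniform on {-1,1}^n. If a is an integer with |a| ≤ n and a ≡ n (mod 2), then Pr[B = a] ≥ 2^{-a²/n} / (2√n). -/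
set_option maxHeartbeats 1000000

open Real Finset Filter Topology

lemma sum_pmSign {n : ℕ} (x : Fin n → Bool) :
    ∑ i, pmSign (x i) = 2 * ((Finset.univ.filter fun i => x i = true).card : ℝ) - n := by
  classical
  have h : ∀ i : Fin n, pmSign (x i) = 2 * (if x i = true then (1:ℝ) else 0) - 1 := by
    intro i; cases hx : x i <;> norm_num [pmSign, hx]
  rw [Finset.sum_congr rfl fun i _ => h i, Finset.sum_sub_distrib, ← Finset.mul_sum,
    Finset.sum_boole]
  simp

lemma card_sum_eq (n k : ℕ) (a : ℤ) (hk : 2*(k:ℤ) = (n:ℤ) + a) :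
    (Finset.univ.filter (fun x : Fin n → Bool => ∑ i, pmSign (x i) = (a : ℝ))).card
      = n.choose k := by
  classical
  have haR : (a:ℝ) = 2*(k:ℝ) - n := by
    have := congrArg (fun z : ℤ => (z : ℝ)) hk
    push_cast at this
    linarith
  have hcond : ∀ x : Fin n → Bool,
      (∑ i, pmSign (x i) = (a:ℝ)) ↔ (Finset.univ.filter fun i => x i = true).card = k := by
    intro x
    rw [sum_pmSign, haR]
    constructor
    · intro h
      have h2 : ((Finset.univ.filter fun i => x i = true).card : ℝ) = (k:ℝ) := by linarith
      exact_mod_cast h2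
    · intro h; rw [h]
  rw [Finset.filter_congr (fun x _ => hcond x)]
  have hcard : (Finset.powersetCard k (Finset.univ : Finset (Fin n))).card = n.choose k := by
    rw [Finset.card_powersetCard, Finset.card_univ, Fintype.card_fin]
  rw [← hcard]
  apply Finset.card_bij (fun x _ => Finset.univ.filter fun i => x i = true)
  · intro x hx
    rw [Finset.mem_powersetCard_univ]
    exact (Finset.mem_filter.mp hx).2
  · intro x hx y hy hxy
    funext i
    have h := Finset.ext_iff.mp hxy i
    simp only [Finset.mem_filter, Finset.mem_univ, true_and] at h
    cases hxi : x i <;> cases hyi : y i <;> simp_all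
  · intro s hs
    refine ⟨fun i => decide (i ∈ s), ?_, ?_⟩
    · rw [Finset.mem_filter]
      refine ⟨Finset.mem_univ _, ?_⟩
      have h1 : (Finset.univ.filter fun i => decide (i ∈ s) = true) = s := by
        ext i; simp
      rw [h1]
      exact Finset.mem_powersetCard_univ.mp hs
    · ext i; simp

/-! ### Stirling bounds -/

lemma sqrt_pi_le_stirlingSeq {n : ℕ} (hn : 1 ≤ n) : Real.sqrt π ≤ Stirling.stirlingSeq n := by
  have ht : Filter.Tendsto (Stirling.stirlingSeq ∘ Nat.succ) atTop (𝓝 (Real.sqrt π)) :=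
    Stirling.tendsto_stirlingSeq_sqrt_pi.comp (Filter.tendsto_add_atTop_nat 1)
  have h := Stirling.stirlingSeq'_antitone.le_of_tendsto ht (n - 1)
  simp only [Function.comp_apply, Nat.succ_eq_add_one] at h
  rwa [show n - 1 + 1 = n by omega] at h

lemma stirlingSeq_le_two {n : ℕ} (hn : 2 ≤ n) :
    Stirling.stirlingSeq n ≤ Real.exp 1 ^ 2 / 4 := by
  have h2 : Stirling.stirlingSeq 2 = Real.exp 1 ^ 2 / 4 := by
    unfold Stirling.stirlingSeq
    have h4 : Real.sqrt (2 * (2:ℕ)) = 2 := by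
      rw [show (2 * (2:ℕ) : ℝ) = 2^2 by norm_num, Real.sqrt_sq (by norm_num)]
    rw [h4]
    have he : Real.exp 1 ≠ 0 := (Real.exp_pos 1).ne'
    field_simp
    norm_num [Nat.factorial]
  have h3 := Stirling.stirlingSeq'_antitone (show 1 ≤ n - 1 by omega)
  simp only [Function.comp_apply, Nat.succ_eq_add_one] at h3
  rw [show n - 1 + 1 = n by omega] at h3
  rw [← h2]
  exact h3

lemma factorial_ge (n : ℕ) (hn : 1 ≤ n) :
    Real.sqrt π * (Real.sqrt (2*n) * ((n:ℝ)/Real.exp 1)^n) ≤ (n.factorial : ℝ) := by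
  have hpos : 0 < Real.sqrt (2*n) * ((n:ℝ)/Real.exp 1)^n := by
    have : (0:ℝ) < n := by exact_mod_cast hn
    positivity
  have h := sqrt_pi_le_stirlingSeq hn
  unfold Stirling.stirlingSeq at h
  rw [le_div_iff₀ hpos] at h
  push_cast at h ⊢
  linarith

lemma factorial_le (n : ℕ) (hn : 2 ≤ n) :
    (n.factorial : ℝ) ≤ (Real.exp 1 ^ 2 / 4) * (Real.sqrt (2*n) * ((n:ℝ)/Real.exp 1)^n) := by
  have hpos : 0 < Real.sqrt (2*n) * ((n:ℝ)/Real.exp 1)^n := by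
    have : (0:ℝ) < n := by exact_mod_cast (show 0 < n by omega)
    positivity
  have h := stirlingSeq_le_two hn
  unfold Stirling.stirlingSeq at h
  rw [div_le_iff₀ hpos] at h
  push_cast at h ⊢
  linarith

/-! ### Mode bound -/

lemma numeric_32sqrtpi : Real.exp 1 ^ 4 ≤ 32 * Real.sqrt π := by
  have he : Real.exp 1 ≤ 2.7182818286 := (Real.exp_one_lt_d9).le
  have he4 : Real.exp 1 ^ 4 ≤ 2.7182818286 ^ 4 := by
    apply pow_le_pow_left₀ (Real.exp_pos 1).le he
  have hpi : (1.772 : ℝ) ≤ Real.sqrt π := by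
    rw [show (1.772:ℝ) = Real.sqrt (1.772^2) from (Real.sqrt_sq (by norm_num)).symm]
    apply Real.sqrt_le_sqrt
    nlinarith [Real.pi_gt_d6]
  nlinarith

lemma mode_stirling (k m : ℕ) (hk : 2 ≤ k) (hm : 2 ≤ m) :
    1 / Real.sqrt (2*((k+m : ℕ):ℝ)) ≤
      (((k+m).choose k : ℝ)) * ((((k:ℝ))/((k+m:ℕ):ℝ))^k * (((m:ℝ))/((k+m:ℕ):ℝ))^m) := by
  obtain ⟨n, hn⟩ : ∃ n, n = k + m := ⟨k+m, rfl⟩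
  rw [← hn]
  have hkR : (0:ℝ) < k := by exact_mod_cast (show 0 < k by omega)
  have hmR : (0:ℝ) < m := by exact_mod_cast (show 0 < m by omega)
  have hnR : (0:ℝ) < (n:ℝ) := by
    have : 0 < n := by omega
    exact_mod_cast this
  have he : (0:ℝ) < Real.exp 1 := Real.exp_pos 1
  set C := Real.exp 1 ^ 2 / 4 with hCdef
  have hC : (0:ℝ) < C := by rw [hCdef]; positivity
  have hchoose : ((n.choose k : ℝ)) = (n.factorial : ℝ) / ((k.factorial : ℝ) * (m.factorial : ℝ)) := by
    have h := Nat.choose_mul_factorial_mul_factorial (show k ≤ n by omega)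
    have h2 : n - k = m := by omega
    rw [h2] at h
    rw [eq_div_iff (by positivity)]
    have h3 : ((n.choose k * k.factorial * m.factorial : ℕ) : ℝ) = (n.factorial : ℝ) := by
      exact_mod_cast congrArg (fun z : ℕ => (z:ℝ)) h
    push_cast at h3 ⊢
    linear_combination h3
  have hfn := factorial_ge n (by omega)
  have hfk := factorial_le k hk
  have hfm := factorial_le m hm
  set Lk := Real.sqrt (2*(k:ℝ)) * ((k:ℝ)/Real.exp 1)^k with hLk
  set Lm := Real.sqrt (2*(m:ℝ)) * ((m:ℝ)/Real.exp 1)^m with hLm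
  set Ln := Real.sqrt (2*(n:ℝ)) * ((n:ℝ)/Real.exp 1)^n with hLn
  have hLkpos : 0 < Lk := by rw [hLk]; positivity
  have hLmpos : 0 < Lm := by rw [hLm]; positivity
  have hLnpos : 0 < Ln := by rw [hLn]; positivity
  have hkfpos : (0:ℝ) < (k.factorial : ℝ) := by exact_mod_cast k.factorial_pos
  have hmfpos : (0:ℝ) < (m.factorial : ℝ) := by exact_mod_cast m.factorial_pos
  set P := (((k:ℝ))/((n:ℕ):ℝ))^k * (((m:ℝ))/((n:ℕ):ℝ))^m with hP
  have hPpos : 0 < P := by rw [hP]; positivity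
  have step1 : Real.sqrt π * Ln / ((C*Lk)*(C*Lm)) * P ≤ ((n.choose k : ℝ)) * P := by
    rw [hchoose]
    apply mul_le_mul_of_nonneg_right _ hPpos.le
    exact div_le_div₀ (by positivity) hfn (by positivity)
      (mul_le_mul hfk hfm hmfpos.le (by positivity))
  have hpow : ((n:ℝ)/Real.exp 1)^n * P = ((k:ℝ)/Real.exp 1)^k * ((m:ℝ)/Real.exp 1)^m := by
    rw [hP, div_pow, div_pow, div_pow, div_pow, div_pow]
    have hnn : (n:ℝ)^n = (n:ℝ)^k * (n:ℝ)^m := by rw [← pow_add, hn]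
    have hee : Real.exp 1 ^ (n:ℕ) = Real.exp 1 ^ k * Real.exp 1 ^ m := by
      rw [← pow_add, hn]
    field_simp
    rw [hnn, hee]
    ring
  have hQ : ((k:ℝ)/Real.exp 1)^k * ((m:ℝ)/Real.exp 1)^m ≠ 0 := by positivity
  have key : Real.sqrt π * Ln / ((C*Lk)*(C*Lm)) * P
      = Real.sqrt π * Real.sqrt (2*(n:ℝ)) / (C^2 * (Real.sqrt (2*(k:ℝ)) * Real.sqrt (2*(m:ℝ)))) := by
    calc Real.sqrt π * Ln / ((C*Lk)*(C*Lm)) * P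
        = (Real.sqrt π * Real.sqrt (2*(n:ℝ))) * (((n:ℝ)/Real.exp 1)^n * P)
            / ((C^2 * (Real.sqrt (2*(k:ℝ)) * Real.sqrt (2*(m:ℝ))))
              * (((k:ℝ)/Real.exp 1)^k * ((m:ℝ)/Real.exp 1)^m)) := by
          rw [hLk, hLm, hLn]; ring
      _ = (Real.sqrt π * Real.sqrt (2*(n:ℝ))) * (((k:ℝ)/Real.exp 1)^k * ((m:ℝ)/Real.exp 1)^m)
            / ((C^2 * (Real.sqrt (2*(k:ℝ)) * Real.sqrt (2*(m:ℝ))))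
              * (((k:ℝ)/Real.exp 1)^k * ((m:ℝ)/Real.exp 1)^m)) := by rw [hpow]
      _ = Real.sqrt π * Real.sqrt (2*(n:ℝ)) / (C^2 * (Real.sqrt (2*(k:ℝ)) * Real.sqrt (2*(m:ℝ)))) :=
          mul_div_mul_right _ _ hQ
  have hsqrts : Real.sqrt (2*(k:ℝ)) * Real.sqrt (2*(m:ℝ)) ≤ (n:ℝ) := by
    rw [← Real.sqrt_mul (by positivity)]
    have h4 : 2*(k:ℝ) * (2*(m:ℝ)) ≤ (n:ℝ)^2 := by
      have : ((n:ℕ):ℝ) = (k:ℝ) + m := by rw [hn]; push_cast; ring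
      rw [this]
      nlinarith [sq_nonneg ((k:ℝ) - m)]
    calc Real.sqrt (2*(k:ℝ) * (2*(m:ℝ))) ≤ Real.sqrt ((n:ℝ)^2) := Real.sqrt_le_sqrt h4
      _ = (n:ℝ) := Real.sqrt_sq hnR.le
  have step2 : Real.sqrt π * Real.sqrt (2*(n:ℝ)) / (C^2 * (n:ℝ))
      ≤ Real.sqrt π * Real.sqrt (2*(n:ℝ)) / (C^2 * (Real.sqrt (2*(k:ℝ)) * Real.sqrt (2*(m:ℝ)))) := by
    apply div_le_div_of_nonneg_left (by positivity) (by positivity)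
    exact mul_le_mul_of_nonneg_left hsqrts (by positivity)
  have step3 : 1 / Real.sqrt (2*((n:ℕ):ℝ)) ≤ Real.sqrt π * Real.sqrt (2*(n:ℝ)) / (C^2 * (n:ℝ)) := by
    rw [div_le_div_iff₀ (by positivity) (by positivity)]
    have hmul : Real.sqrt π * Real.sqrt (2*(n:ℝ)) * Real.sqrt (2*(n:ℝ))
        = Real.sqrt π * (2*(n:ℝ)) := by
      rw [mul_assoc, Real.mul_self_sqrt (by positivity)]
    rw [hmul]
    have h32 := numeric_32sqrtpi
    have hCsq : C^2 = Real.exp 1 ^ 4 / 16 := by rw [hCdef]; ring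
    rw [hCsq]
    nlinarith [Real.sqrt_nonneg π, hnR]
  calc 1 / Real.sqrt (2*((n:ℕ):ℝ)) ≤ Real.sqrt π * Real.sqrt (2*(n:ℝ)) / (C^2 * (n:ℝ)) := step3
    _ ≤ Real.sqrt π * Real.sqrt (2*(n:ℝ)) / (C^2 * (Real.sqrt (2*(k:ℝ)) * Real.sqrt (2*(m:ℝ)))) := step2
    _ = Real.sqrt π * Ln / ((C*Lk)*(C*Lm)) * P := key.symm
    _ ≤ ((n.choose k : ℝ)) * P := step1

lemma one_case (n : ℕ) (hn4 : 4 ≤ n) :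
    1 / Real.sqrt (2*(n:ℝ)) ≤ (((n:ℝ)-1)/(n:ℝ))^(n-1) := by
  have hn4R : (4:ℝ) ≤ (n:ℝ) := by exact_mod_cast hn4
  have hnpos : (0:ℝ) < n := by linarith
  have hpos : (0:ℝ) < (n:ℝ)-1 := by linarith
  have hstep : (n:ℝ)/((n:ℝ)-1) ≤ Real.exp (1/((n:ℝ)-1)) := by
    have h := Real.add_one_le_exp (1/((n:ℝ)-1))
    have heq : (n:ℝ)/((n:ℝ)-1) = 1/((n:ℝ)-1) + 1 := by field_simp; ring
    rw [heq]; exact h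
  have hpow : ((n:ℝ)/((n:ℝ)-1))^(n-1) ≤ Real.exp 1 := by
    calc ((n:ℝ)/((n:ℝ)-1))^(n-1) ≤ Real.exp (1/((n:ℝ)-1))^(n-1) :=
          pow_le_pow_left₀ (by positivity) hstep _
      _ = Real.exp (((n-1:ℕ):ℝ) * (1/((n:ℝ)-1))) := (Real.exp_nat_mul _ _).symm
      _ = Real.exp 1 := by
          congr 1
          have hc : ((n-1:ℕ):ℝ) = (n:ℝ)-1 := by
            have := Nat.cast_sub (show 1 ≤ n by omega) (R := ℝ)
            simpa using this
          rw [hc]; field_simp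
  have hinv : Real.exp (-1) ≤ (((n:ℝ)-1)/(n:ℝ))^(n-1) := by
    have h1 : (((n:ℝ)-1)/(n:ℝ))^(n-1) = (((n:ℝ)/((n:ℝ)-1))^(n-1))⁻¹ := by
      rw [← inv_pow, inv_div]
    rw [Real.exp_neg, h1]
    exact inv_anti₀ (by positivity) hpow
  have hsq : Real.exp 1 ≤ Real.sqrt (2*(n:ℝ)) := by
    rw [show Real.exp 1 = Real.sqrt ((Real.exp 1)^2) from (Real.sqrt_sq (Real.exp_pos 1).le).symm]
    apply Real.sqrt_le_sqrt
    have he := Real.exp_one_lt_d9.le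
    nlinarith [Real.exp_pos 1]
  calc 1/Real.sqrt (2*(n:ℝ)) ≤ 1/Real.exp 1 :=
        one_div_le_one_div_of_le (Real.exp_pos 1) hsq
    _ = Real.exp (-1) := by rw [Real.exp_neg, one_div]
    _ ≤ _ := hinv

lemma mode_bound (n k : ℕ) (hn : 1 ≤ n) (hkn : k ≤ n) :
    1 / Real.sqrt (2*((n:ℕ):ℝ)) ≤
      (n.choose k : ℝ) * (((k:ℝ)/((n:ℕ):ℝ))^k * (((n-k:ℕ):ℝ)/((n:ℕ):ℝ))^(n-k)) := by
  have hnR : (0:ℝ) < (n:ℝ) := by exact_mod_cast hn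
  have h1le : (1:ℝ) ≤ Real.sqrt (2*(n:ℝ)) := by
    rw [show (1:ℝ) = Real.sqrt 1 from Real.sqrt_one.symm]
    apply Real.sqrt_le_sqrt
    have : (1:ℝ) ≤ (n:ℝ) := by exact_mod_cast hn
    linarith
  rcases eq_or_ne k 0 with hk0 | hk0
  · subst hk0
    simp only [Nat.choose_zero_right, Nat.cast_one, Nat.sub_zero, pow_zero, one_mul,
      Nat.cast_zero, div_self hnR.ne']
    rw [one_pow]
    exact div_le_one_of_le₀ h1le (by positivity)
  rcases eq_or_ne k n with hkn' | hkn'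
  · subst hkn'
    simp only [Nat.choose_self, Nat.cast_one, Nat.sub_self, pow_zero, one_mul, mul_one,
      div_self hnR.ne']
    rw [one_pow]
    exact div_le_one_of_le₀ h1le (by positivity)
  -- now 1 ≤ k ≤ n-1
  rcases eq_or_ne k 1 with hk1 | hk1
  · subst hk1
    rcases Nat.lt_or_ge n 4 with hn4 | hn4
    · -- n = 2 or n = 3
      interval_cases n
      · exact (hkn' rfl).elim
      · -- n = 2, k = 1
        norm_num
      · -- n = 3, k = 1
        have hg : ((Nat.choose 3 1 : ℕ) : ℝ)
            * ((((1:ℕ):ℝ)/((3:ℕ):ℝ))^1 * ((((3-1:ℕ)):ℝ)/((3:ℕ):ℝ))^(3-1)) = 4/9 := by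
          norm_num
        rw [hg, show (2*((3:ℕ):ℝ)) = 6 by norm_num]
        have h6 : (9:ℝ)/4 ≤ Real.sqrt 6 := by
          rw [show (9:ℝ)/4 = Real.sqrt ((9/4)^2) from (Real.sqrt_sq (by norm_num)).symm]
          apply Real.sqrt_le_sqrt; norm_num
        calc (1:ℝ)/Real.sqrt 6 ≤ 1/((9:ℝ)/4) :=
              one_div_le_one_div_of_le (by norm_num) h6
          _ = 4/9 := by norm_num
    · have hc : ((n-1:ℕ):ℝ) = (n:ℝ)-1 := by
        have := Nat.cast_sub (show 1 ≤ n by omega) (R := ℝ)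
        simpa using this
      rw [Nat.choose_one_right, hc, Nat.cast_one]
      have hexpr : (n:ℝ) * (((1:ℝ)/(n:ℝ))^1 * ((((n:ℝ)-1))/(n:ℝ))^(n-1))
          = (((n:ℝ)-1)/(n:ℝ))^(n-1) := by
        field_simp
      rw [hexpr]
      exact one_case n hn4
  rcases eq_or_ne k (n-1) with hkn1 | hkn1
  · subst hkn1
    rcases Nat.lt_or_ge n 4 with hn4 | hn4
    · -- n = 3, k = 2 (n=2 gives k=1 handled above)
      have hn3 : n = 3 := by omega
      subst hn3
      have hg : ((Nat.choose 3 2 : ℕ) : ℝ)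
          * ((((2:ℕ):ℝ)/((3:ℕ):ℝ))^2 * ((((3-2:ℕ)):ℝ)/((3:ℕ):ℝ))^(3-2)) = 4/9 := by
        norm_num
      rw [show (3:ℕ)-1 = 2 from rfl] at *
      rw [hg, show (2*((3:ℕ):ℝ)) = 6 by norm_num]
      have h6 : (9:ℝ)/4 ≤ Real.sqrt 6 := by
        rw [show (9:ℝ)/4 = Real.sqrt ((9/4)^2) from (Real.sqrt_sq (by norm_num)).symm]
        apply Real.sqrt_le_sqrt; norm_num
      calc (1:ℝ)/Real.sqrt 6 ≤ 1/((9:ℝ)/4) :=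
            one_div_le_one_div_of_le (by norm_num) h6
        _ = 4/9 := by norm_num
    · have hc : ((n-1:ℕ):ℝ) = (n:ℝ)-1 := by
        have := Nat.cast_sub (show 1 ≤ n by omega) (R := ℝ)
        simpa using this
      have hch : n.choose (n-1) = n := by
        rw [Nat.choose_symm (show 1 ≤ n by omega), Nat.choose_one_right]
      have hsub : n - (n-1) = 1 := by omega
      rw [hch, hsub, hc]
      have hexpr : (n:ℝ) * (((((n:ℝ)-1))/(n:ℝ))^(n-1) * (((1:ℕ):ℝ)/(n:ℝ))^1)
          = (((n:ℝ)-1)/(n:ℝ))^(n-1) := by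
        push_cast
        field_simp
      rw [hexpr]
      exact one_case n hn4
  -- middle: 2 ≤ k ≤ n - 2
  have hk2 : 2 ≤ k := by omega
  have hm2 : 2 ≤ n - k := by omega
  have h := mode_stirling k (n-k) hk2 hm2
  rw [Nat.add_sub_cancel' hkn] at h
  exact h

/-! ### Entropy inequality -/

noncomputable def entCoef (j : ℕ) : ℝ := 2/((2*(j:ℝ)+1)*(2*(j:ℝ)+2))

lemma entCoef_nonneg (j : ℕ) : 0 ≤ entCoef j := by
  unfold entCoef; positivity

lemma hasSum_F {x : ℝ} (hx : |x| < 1) :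
    HasSum (fun j : ℕ => x^(2*j+2) * entCoef j)
      ((1+x)*Real.log (1+x) + (1-x)*Real.log (1-x)) := by
  have hx1 : 0 < 1 + x := by have := abs_lt.mp hx; linarith
  have hx2 : 0 < 1 - x := by have := abs_lt.mp hx; linarith
  have hxsq : |x^2| < 1 := by
    rw [abs_pow]
    exact pow_lt_one₀ (abs_nonneg x) hx (by norm_num)
  have h1 := Real.hasSum_log_sub_log_of_abs_lt_one hx
  have h2 := Real.hasSum_pow_div_log_of_abs_lt_one hxsq
  have combined := (h1.mul_left x).sub h2
  have hval : x*(Real.log (1+x) - Real.log (1-x)) - -Real.log (1-x^2)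
      = (1+x)*Real.log (1+x) + (1-x)*Real.log (1-x) := by
    rw [show (1:ℝ) - x^2 = (1+x)*(1-x) by ring, Real.log_mul hx1.ne' hx2.ne']
    ring
  have hterm : ∀ j : ℕ, x*((2:ℝ)*(1/(2*(j:ℝ)+1))*x^(2*j+1)) - (x^2)^(j+1)/((j:ℝ)+1)
      = x^(2*j+2) * entCoef j := by
    intro j
    unfold entCoef
    have e1 : (x^2)^(j+1) = x^(2*j+2) := by rw [← pow_mul]; ring_nf
    have e2 : x * x^(2*j+1) = x^(2*j+2) := by rw [mul_comm, ← pow_succ]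
    have d1 : (2*(j:ℝ)+1) ≠ 0 := by positivity
    have d2 : ((j:ℝ)+1) ≠ 0 := by positivity
    have d3 : (2*(j:ℝ)+2) ≠ 0 := by positivity
    rw [e1, show x*((2:ℝ)*(1/(2*(j:ℝ)+1))*x^(2*j+1)) = (x*x^(2*j+1))*(2/(2*(j:ℝ)+1)) by ring,
      e2]
    field_simp
    ring
  have hfun : (fun j : ℕ => x^(2*j+2) * entCoef j)
      = fun j : ℕ => x*((2:ℝ)*(1/(2*(j:ℝ)+1))*x^(2*j+1)) - (x^2)^(j+1)/((j:ℝ)+1) :=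
    funext fun j => (hterm j).symm
  rw [hfun, ← hval]
  exact combined

lemma F_le {x : ℝ} (hx : |x| < 1) :
    (1+x)*Real.log (1+x) + (1-x)*Real.log (1-x) ≤ x^2 * (2 * Real.log 2) := by
  have hsummable : Summable entCoef := by
    have hg : Summable (fun j : ℕ => 1/((j:ℝ)+1)^2) := by
      have h0 : Summable (fun n : ℕ => 1/((n:ℝ))^2) := summable_one_div_nat_pow.mpr one_lt_two
      have h1 := (summable_nat_add_iff 1).mpr h0
      apply h1.congr
      intro j
      push_cast
      ring
    refine Summable.of_nonneg_of_le entCoef_nonneg (fun j => ?_) hg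
    unfold entCoef
    rw [div_le_div_iff₀ (by positivity) (by positivity)]
    have hj : (0:ℝ) ≤ (j:ℝ) := Nat.cast_nonneg j
    nlinarith
  have hS : ∑' j, entCoef j ≤ 2 * Real.log 2 := by
    apply Real.tsum_le_of_sum_range_le entCoef_nonneg
    intro N
    set u : ℕ → ℝ := fun t => 1 - 1/((t:ℝ)+1) with hu
    have hu01 : ∀ t, 0 ≤ u t ∧ u t < 1 := by
      intro t
      have h1 : 0 < 1/((t:ℝ)+1) := by positivity
      have h2 : 1/((t:ℝ)+1) ≤ 1 := by
        rw [div_le_one (by positivity)]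
        linarith [Nat.cast_nonneg (α := ℝ) t]
      exact ⟨by simp only [hu]; linarith, by simp only [hu]; linarith⟩
    have habs : ∀ t, |u t| < 1 := by
      intro t
      rw [abs_lt]
      exact ⟨by linarith [(hu01 t).1], (hu01 t).2⟩
    have hulim : Filter.Tendsto u atTop (𝓝 1) := by
      have h0 := tendsto_one_div_add_atTop_nhds_zero_nat (𝕜 := ℝ)
      have h2 := (tendsto_const_nhds (x := (1:ℝ)) (f := (atTop : Filter ℕ))).sub h0
      rw [sub_zero] at h2
      rw [hu]
      exact h2
    have hlhs : Filter.Tendsto (fun t => ∑ j ∈ Finset.range N, (u t)^(2*j+2) * entCoef j) atTop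
        (𝓝 (∑ j ∈ Finset.range N, entCoef j)) := by
      apply tendsto_finset_sum
      intro j _
      have h3 := (hulim.pow (2*j+2)).mul_const (entCoef j)
      simpa using h3
    have hrhs : Filter.Tendsto
        (fun t => (1+u t)*Real.log (1+u t) + (1-u t)*Real.log (1-u t)) atTop
        (𝓝 (2 * Real.log 2)) := by
      have hcont1 : ContinuousAt (fun y : ℝ => (1+y)*Real.log (1+y)) 1 := by
        apply ContinuousAt.mul (by fun_prop)
        exact ContinuousAt.comp (Real.continuousAt_log (by norm_num)) (by fun_prop)
      have hcont2 : ContinuousAt (fun y : ℝ => Real.negMulLog (1-y)) 1 :=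
        (Real.continuous_negMulLog.comp (continuous_const.sub continuous_id)).continuousAt
      have hcont := hcont1.sub hcont2
      have hval : (fun y : ℝ => (1+y)*Real.log (1+y) - Real.negMulLog (1-y)) 1
          = 2 * Real.log 2 := by
        simp [Real.negMulLog]
        ring
      have h4 : Filter.Tendsto (fun y : ℝ => (1+y)*Real.log (1+y) - Real.negMulLog (1-y))
          (𝓝 1) (𝓝 (2 * Real.log 2)) := by
        rw [← hval]
        exact hcont
      have h5 := h4.comp hulim
      apply h5.congr
      intro t
      simp only [Function.comp_apply, Real.negMulLog]
      ring
    have hle : ∀ t, ∑ j ∈ Finset.range N, (u t)^(2*j+2) * entCoef j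
        ≤ (1+u t)*Real.log (1+u t) + (1-u t)*Real.log (1-u t) := by
      intro t
      exact sum_le_hasSum (Finset.range N)
        (fun j _ => mul_nonneg (pow_nonneg (hu01 t).1 _) (entCoef_nonneg j))
        (hasSum_F (habs t))
    exact le_of_tendsto_of_tendsto' hlhs hrhs hle
  have hx2le : x^2 ≤ 1 := by
    have h := abs_lt.mp hx
    nlinarith
  have hterm : ∀ j : ℕ, x^(2*j+2)*entCoef j ≤ x^2 * entCoef j := by
    intro j
    apply mul_le_mul_of_nonneg_right _ (entCoef_nonneg j)
    calc x^(2*j+2) = (x^2)^(j+1) := by rw [← pow_mul]; ring_nf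
      _ ≤ (x^2)^1 := pow_le_pow_of_le_one (sq_nonneg x) hx2le (by omega)
      _ = x^2 := pow_one _
  calc (1+x)*Real.log (1+x) + (1-x)*Real.log (1-x)
      ≤ x^2 * ∑' j, entCoef j :=
        hasSum_le hterm (hasSum_F hx) (hsummable.hasSum.mul_left (x^2))
    _ ≤ x^2 * (2 * Real.log 2) := mul_le_mul_of_nonneg_left hS (sq_nonneg x)

lemma pow_eq_exp_log (b : ℝ) (hb : 0 < b) (j : ℕ) :
    b ^ j = Real.exp ((j:ℝ) * Real.log b) := by
  rw [Real.exp_nat_mul, Real.exp_log hb]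

lemma entropy_pow_le (n k : ℕ) (h1 : 1 ≤ k) (h2 : k < n) :
    (2*(k:ℝ)/(n:ℝ))^k * (2*((n:ℝ)-(k:ℝ))/(n:ℝ))^(n-k)
      ≤ (2:ℝ) ^ ((2*(k:ℝ)-(n:ℝ))^2 / (n:ℝ)) := by
  have hnR : (0:ℝ) < n := by exact_mod_cast (show 0 < n by omega)
  have hkR : (0:ℝ) < k := by exact_mod_cast (show 0 < k by omega)
  have hkn : (k:ℝ) < (n:ℝ) := by exact_mod_cast h2
  set x : ℝ := (2*(k:ℝ) - n)/n with hxdef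
  have h1x : 1 + x = 2*(k:ℝ)/n := by rw [hxdef]; field_simp; ring
  have h2x : 1 - x = 2*((n:ℝ)-(k:ℝ))/n := by rw [hxdef]; field_simp; ring
  have hp : (0:ℝ) < 1 + x := by rw [h1x]; positivity
  have hq : (0:ℝ) < 1 - x := by
    rw [h2x]
    have h3 : (0:ℝ) < (n:ℝ)-k := by linarith
    positivity
  have hax : |x| < 1 := abs_lt.mpr ⟨by linarith, by linarith⟩
  have hcast : ((n-k:ℕ):ℝ) = (n:ℝ)-(k:ℝ) := by
    have := Nat.cast_sub h2.le (R := ℝ)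
    simpa using this
  have hkx : (k:ℝ) = (n:ℝ)*(1+x)/2 := by rw [h1x]; field_simp
  have hmx : ((n-k:ℕ):ℝ) = (n:ℝ)*(1-x)/2 := by rw [hcast, h2x]; field_simp
  have hexp_le : (k:ℝ) * Real.log (1+x) + ((n-k:ℕ):ℝ) * Real.log (1-x)
      ≤ Real.log 2 * ((2*(k:ℝ)-(n:ℝ))^2 / (n:ℝ)) := by
    calc (k:ℝ) * Real.log (1+x) + ((n-k:ℕ):ℝ) * Real.log (1-x)
        = ((n:ℝ)/2) * ((1+x)*Real.log (1+x) + (1-x)*Real.log (1-x)) := by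
          rw [hkx, hmx]; ring
      _ ≤ ((n:ℝ)/2) * (x^2 * (2*Real.log 2)) :=
          mul_le_mul_of_nonneg_left (F_le hax) (by positivity)
      _ = Real.log 2 * ((n:ℝ) * x^2) := by ring
      _ = Real.log 2 * ((2*(k:ℝ)-(n:ℝ))^2 / (n:ℝ)) := by
          rw [hxdef]; congr 1; field_simp
  calc (2*(k:ℝ)/(n:ℝ))^k * (2*((n:ℝ)-(k:ℝ))/(n:ℝ))^(n-k)
      = Real.exp ((k:ℝ) * Real.log (1+x) + ((n-k:ℕ):ℝ) * Real.log (1-x)) := by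
        rw [Real.exp_add, ← h1x, ← h2x, pow_eq_exp_log _ hp, pow_eq_exp_log _ hq]
    _ ≤ Real.exp (Real.log 2 * ((2*(k:ℝ)-(n:ℝ))^2 / (n:ℝ))) := Real.exp_le_exp.mpr hexp_le
    _ = (2:ℝ) ^ ((2*(k:ℝ)-(n:ℝ))^2 / (n:ℝ)) := (Real.rpow_def_of_pos two_pos _).symm

lemma main_mid (n k : ℕ) (h1 : 1 ≤ k) (h2 : k < n) :
    ((n.choose k : ℝ)) / 2^n ≥ (2:ℝ) ^ (-((2*(k:ℝ)-(n:ℝ))^2) / (n:ℝ)) / (2 * Real.sqrt n) := by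
  have hnR : (0:ℝ) < n := by exact_mod_cast (show 0 < n by omega)
  have hkR : (0:ℝ) < k := by exact_mod_cast (show 0 < k by omega)
  have hknR : (k:ℝ) < (n:ℝ) := by exact_mod_cast h2
  have hcast : ((n-k:ℕ):ℝ) = (n:ℝ)-(k:ℝ) := by
    have := Nat.cast_sub h2.le (R := ℝ)
    simpa using this
  set p : ℝ := (k:ℝ)/(n:ℝ) with hpdef
  set q : ℝ := ((n-k:ℕ):ℝ)/(n:ℝ) with hqdef
  have hppos : 0 < p := by rw [hpdef]; positivity
  have hqpos : 0 < q := by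
    rw [hqdef, hcast]
    have h3 : (0:ℝ) < (n:ℝ)-k := by linarith
    positivity
  have hT := mode_bound n k (by omega) h2.le
  have hE := entropy_pow_le n k h1 h2
  set c : ℝ := (2*(k:ℝ)-(n:ℝ))^2 / (n:ℝ) with hcdef
  have hcnn : 0 ≤ c := by rw [hcdef]; positivity
  set E : ℝ := (2*(k:ℝ)/(n:ℝ))^k * (2*((n:ℝ)-(k:ℝ))/(n:ℝ))^(n-k) with hEdef
  have hEpos : 0 < E := by
    rw [hEdef]
    have h3 : (0:ℝ) < (n:ℝ)-k := by linarith
    positivity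
  have hprod : E = 2^n * (p^k * q^(n-k)) := by
    have e1 : (2*(k:ℝ)/n) = 2*p := by rw [hpdef]; ring
    have e2 : (2*((n:ℝ)-(k:ℝ))/n) = 2*q := by rw [hqdef, hcast]; ring
    rw [hEdef, e1, e2, mul_pow, mul_pow,
      show (2:ℝ)^k * p^k * ((2:ℝ)^(n-k) * q^(n-k)) = ((2:ℝ)^k*2^(n-k)) * (p^k * q^(n-k)) by ring,
      ← pow_add, Nat.add_sub_cancel' h2.le]
  have hX : p^k * q^(n-k) ≠ 0 := by positivity
  have hkey : ((n.choose k:ℝ)) / 2^n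
      = ((n.choose k:ℝ) * (p^k * q^(n-k))) / E := by
    rw [hprod, mul_comm ((2:ℝ)^n) (p^k * q^(n-k)),
      show ((n.choose k:ℝ) * (p^k * q^(n-k))) = (p^k * q^(n-k)) * (n.choose k:ℝ) by ring,
      mul_div_mul_left _ _ hX]
  rw [ge_iff_le, hkey]
  have hTnn : 0 ≤ (n.choose k:ℝ) * (p^k * q^(n-k)) := by positivity
  have step1 : (1/Real.sqrt (2*(n:ℝ))) / (2:ℝ)^c
      ≤ ((n.choose k:ℝ) * (p^k * q^(n-k))) / E :=
    div_le_div₀ hTnn hT (hEpos) hE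
  have hsqrt2n : Real.sqrt (2*(n:ℝ)) ≤ 2 * Real.sqrt n := by
    rw [Real.sqrt_mul (by norm_num : (0:ℝ) ≤ 2)]
    apply mul_le_mul_of_nonneg_right _ (Real.sqrt_nonneg _)
    nlinarith [Real.sq_sqrt (by norm_num : (0:ℝ) ≤ 2), Real.sqrt_nonneg 2]
  have step0 : (2:ℝ) ^ (-((2*(k:ℝ)-(n:ℝ))^2) / (n:ℝ)) / (2 * Real.sqrt n)
      ≤ (1/Real.sqrt (2*(n:ℝ))) / (2:ℝ)^c := by
    have hneg : -((2*(k:ℝ)-(n:ℝ))^2) / (n:ℝ) = -c := by rw [hcdef]; ring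
    rw [hneg, Real.rpow_neg (by norm_num : (0:ℝ) ≤ 2)]
    have hrw : ((2:ℝ)^c)⁻¹ / (2 * Real.sqrt n) = (1/(2 * Real.sqrt n)) / (2:ℝ)^c := by
      ring
    rw [hrw]
    have h9 : (1:ℝ)/(2*Real.sqrt n) ≤ 1/Real.sqrt (2*(n:ℝ)) :=
      one_div_le_one_div_of_le (Real.sqrt_pos.mpr (by positivity)) hsqrt2n
    exact (div_le_div_iff_of_pos_right (Real.rpow_pos_of_pos two_pos c)).mpr h9
  exact le_trans step0 step1

/-- Point probability lower bound for the centered binomial distribution: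
if `|a| ≤ n` and `a ≡ n (mod 2)`, then `Pr[B = a] ≥ 2^{-a²/n} / (2√n)`. -/
theorem stmt_1 (n : ℕ) (hn : 0 < n) (a : ℤ) (ha : |a| ≤ (n : ℤ))
    (hpar : a ≡ (n : ℤ) [ZMOD 2]) :
    ((Finset.univ.filter (fun x : Fin n → Bool => ∑ i, pmSign (x i) = (a : ℝ))).card : ℝ)
      / 2 ^ n ≥ 2 ^ (-((a : ℝ) ^ 2) / n) / (2 * Real.sqrt n) := by
  have hdvd : (2:ℤ) ∣ (n:ℤ) + a := by
    have h0 : (2:ℤ) ∣ (n:ℤ) - a := Int.ModEq.dvd hpar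
    have h1 : (n:ℤ) + a = ((n:ℤ) - a) + 2*a := by ring
    rw [h1]; exact dvd_add h0 ⟨a, rfl⟩
  obtain ⟨d, hd⟩ := hdvd
  have habs := abs_le.mp ha
  have hd0 : 0 ≤ d := by omega
  have hdn : d ≤ (n:ℤ) := by omega
  obtain ⟨k, hkd⟩ : ∃ k : ℕ, (k:ℤ) = d := ⟨d.toNat, Int.toNat_of_nonneg hd0⟩
  have hk2 : 2*(k:ℤ) = (n:ℤ) + a := by rw [hkd]; omega
  have hkn : k ≤ n := by
    have h3 : (k:ℤ) ≤ (n:ℤ) := by rw [hkd]; exact hdn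
    exact_mod_cast h3
  rw [card_sum_eq n k a hk2]
  have haR : (a:ℝ) = 2*(k:ℝ) - n := by
    have h4 := congrArg (fun z : ℤ => (z:ℝ)) hk2
    push_cast at h4
    linarith
  have hnR : (0:ℝ) < n := by exact_mod_cast hn
  have hsqrt1 : (1:ℝ) ≤ 2 * Real.sqrt n := by
    have h5 : (1:ℝ) ≤ Real.sqrt n := by
      rw [show (1:ℝ) = Real.sqrt 1 from Real.sqrt_one.symm]
      apply Real.sqrt_le_sqrt
      exact_mod_cast hn
    linarith
  rcases eq_or_ne k 0 with h0 | h0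
  · subst h0
    have ha' : (a:ℝ) = -(n:ℝ) := by rw [haR]; norm_num
    rw [Nat.choose_zero_right, ha']
    have hexp : -((-(n:ℝ))^2)/(n:ℝ) = -((n:ℕ):ℝ) := by
      rw [neg_sq]
      field_simp
    rw [hexp, Real.rpow_neg (by norm_num : (0:ℝ) ≤ 2), Real.rpow_natCast]
    rw [ge_iff_le]
    calc ((2:ℝ)^n)⁻¹/(2*Real.sqrt n) ≤ ((2:ℝ)^n)⁻¹ :=
          div_le_self (by positivity) hsqrt1
      _ = ((1:ℕ):ℝ)/2^n := by norm_num
  rcases eq_or_ne k n with h0' | h0'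
  · subst h0'
    have ha' : (a:ℝ) = (k:ℝ) := by rw [haR]; ring
    rw [Nat.choose_self, ha']
    have hk0R : (k:ℝ) ≠ 0 := Nat.cast_ne_zero.mpr h0
    have hexp : -(((k:ℝ))^2)/(k:ℝ) = -((k:ℕ):ℝ) := by
      field_simp
    rw [hexp, Real.rpow_neg (by norm_num : (0:ℝ) ≤ 2), Real.rpow_natCast]
    rw [ge_iff_le]
    calc ((2:ℝ)^k)⁻¹/(2*Real.sqrt k) ≤ ((2:ℝ)^k)⁻¹ :=
          div_le_self (by positivity) hsqrt1
      _ = ((1:ℕ):ℝ)/2^k := by norm_num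
  · have h6 := main_mid n k (by omega) (by omega)
    rw [haR]
    exact h6
end

section
/- For every real x with |x| < 1, the infinite product ∏_{i=1}^∞ (1 - x^i) (for 0 ≤ x < 1) satisfies ∏_{i=1}^∞ (1 - x^i) ≥ exp(-π²/(6(1-x))). -/
open Real

/-- `(n+1) * x^n * (1-x) ≤ 1 - x^(n+1)` for `0 ≤ x ≤ 1`. -/
lemma aux_key (x : ℝ) (hx0 : 0 ≤ x) (hx1 : x ≤ 1) :
    ∀ n : ℕ, ((n : ℝ) + 1) * x ^ n * (1 - x) ≤ 1 - x ^ (n + 1) := by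
  intro n
  induction n with
  | zero => simp
  | succ m ih =>
    have hle : x ^ (m + 1) ≤ x ^ m := pow_le_pow_of_le_one hx0 hx1 (Nat.le_succ m)
    have h1x : 0 ≤ 1 - x := by linarith
    push_cast
    have h5 : 0 ≤ ((m:ℝ) + 1) * (x ^ m - x ^ (m + 1)) * (1 - x) :=
      mul_nonneg (mul_nonneg (by positivity) (sub_nonneg.mpr hle)) h1x
    have hps : x ^ (m + 1 + 1) = x ^ (m + 1) * x := pow_succ x (m + 1)
    nlinarith [ih, h5, hps]

/-- For `0 ≤ x < 1`, `∏_{i=1}^∞ (1 - x^i) ≥ exp(-π²/(6(1-x)))`. -/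
theorem stmt_3 (x : ℝ) (hx0 : 0 ≤ x) (hx1 : x < 1) :
    ∏' i : ℕ, (1 - x ^ (i + 1)) ≥ Real.exp (-(Real.pi ^ 2) / (6 * (1 - x))) := by
  have h1x : (0:ℝ) < 1 - x := by linarith
  have hxi1 : ∀ i : ℕ, x ^ (i + 1) < 1 := fun i => pow_lt_one₀ hx0 hx1 i.succ_ne_zero
  have hxi0 : ∀ i : ℕ, 0 ≤ x ^ (i + 1) := fun i => pow_nonneg hx0 _
  have hpos : ∀ i : ℕ, 0 < 1 - x ^ (i + 1) := fun i => by linarith [hxi1 i]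
  -- summability of the geometric series
  have hgeo : Summable (fun i : ℕ => x ^ (i + 1)) := by
    have := (summable_geometric_of_lt_one hx0 hx1).mul_right x
    refine this.congr fun i => ?_
    rw [← pow_succ]
  -- bound on -log
  have hlogle : ∀ i : ℕ, -Real.log (1 - x ^ (i + 1)) ≤ x ^ (i + 1) / (1 - x) := by
    intro i
    rw [← Real.log_inv]
    have h2 := Real.log_le_sub_one_of_pos (inv_pos.mpr (hpos i))
    have hxx : x ^ (i + 1) ≤ x := by
      calc x ^ (i + 1) ≤ x ^ 1 :=
            pow_le_pow_of_le_one hx0 hx1.le (Nat.one_le_iff_ne_zero.mpr i.succ_ne_zero)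
        _ = x := pow_one x
    calc Real.log (1 - x ^ (i + 1))⁻¹ ≤ (1 - x ^ (i + 1))⁻¹ - 1 := h2
      _ = x ^ (i + 1) / (1 - x ^ (i + 1)) := by field_simp [(hpos i).ne']; ring
      _ ≤ x ^ (i + 1) / (1 - x) := by
          apply div_le_div_of_nonneg_left (hxi0 i) h1x
          linarith
  have hlognn : ∀ i : ℕ, 0 ≤ -Real.log (1 - x ^ (i + 1)) := by
    intro i
    have : Real.log (1 - x ^ (i + 1)) ≤ 0 :=
      Real.log_nonpos (le_of_lt (hpos i)) (by linarith [hxi0 i])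
    linarith
  have hsumlog : Summable (fun i : ℕ => Real.log (1 - x ^ (i + 1))) := by
    rw [← summable_neg_iff]
    exact Summable.of_nonneg_of_le hlognn hlogle (hgeo.div_const (1 - x))
  -- product = exp of sum of logs
  have htp : ∏' i : ℕ, (1 - x ^ (i + 1))
      = Real.exp (∑' i : ℕ, Real.log (1 - x ^ (i + 1))) := by
    exact (Real.rexp_tsum_eq_tprod (fun i => hpos i) hsumlog).symm
  rw [htp, ge_iff_le, Real.exp_le_exp]
  -- the double series
  set f : ℕ → ℕ → ℝ := fun i j => x ^ ((i + 1) * (j + 1)) / (j + 1) with hf_def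
  have hfnn : ∀ i j, 0 ≤ f i j := fun i j =>
    div_nonneg (pow_nonneg hx0 _) (by positivity)
  have hrow : ∀ i, HasSum (fun j => f i j) (-Real.log (1 - x ^ (i + 1))) := by
    intro i
    have habs : |x ^ (i + 1)| < 1 := by
      rw [abs_of_nonneg (hxi0 i)]; exact hxi1 i
    have := hasSum_pow_div_log_of_abs_lt_one habs
    refine this.congr_fun fun j => ?_
    simp only [hf_def, ← pow_mul]
  have hF : Summable (Function.uncurry f) := by
    have hsum2 : Summable (fun p : ℕ × ℕ => x ^ (p.1 + 1) * x ^ p.2) :=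
      hgeo.mul_of_nonneg (summable_geometric_of_lt_one hx0 hx1)
        (fun i => hxi0 i) (fun j => pow_nonneg hx0 j)
    refine Summable.of_nonneg_of_le (fun p => hfnn p.1 p.2) (fun p => ?_) hsum2
    have h1 : x ^ ((p.1 + 1) * (p.2 + 1)) ≤ x ^ (p.1 + 1 + p.2) := by
      apply pow_le_pow_of_le_one hx0 hx1.le
      nlinarith [p.1.zero_le, p.2.zero_le]
    calc Function.uncurry f p ≤ x ^ ((p.1 + 1) * (p.2 + 1)) := by
          apply div_le_self (pow_nonneg hx0 _)
          linarith [Nat.cast_nonneg (α := ℝ) p.2]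
      _ ≤ x ^ (p.1 + 1 + p.2) := h1
      _ = x ^ (p.1 + 1) * x ^ p.2 := by rw [pow_add]
  have hcol : ∀ j : ℕ, HasSum (fun i => f i j)
      (x ^ (j + 1) / (1 - x ^ (j + 1)) / (j + 1)) := by
    intro j
    have hr0 : 0 ≤ x ^ (j + 1) := hxi0 j
    have hr1 : x ^ (j + 1) < 1 := hxi1 j
    have hg : HasSum (fun i : ℕ => x ^ (j + 1) * (x ^ (j + 1)) ^ i)
        (x ^ (j + 1) * (1 - x ^ (j + 1))⁻¹) :=
      (hasSum_geometric_of_lt_one hr0 hr1).mul_left _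
    have := hg.div_const ((j : ℝ) + 1)
    refine this.congr_fun fun i => ?_
    simp only [hf_def]
    rw [← pow_succ', ← pow_mul]
    ring_nf
  -- bound the column sums
  have hzeta : HasSum (fun j : ℕ => x / (1 - x) * (1 / ((j : ℝ) + 1) ^ 2))
      (x / (1 - x) * (π ^ 2 / 6)) := by
    have h0 : HasSum (fun n : ℕ => (1 : ℝ) / ((n : ℝ)) ^ 2) (π ^ 2 / 6) := hasSum_zeta_two
    have h1 : HasSum (fun n : ℕ => (1 : ℝ) / ((n + 1 : ℕ) : ℝ) ^ 2)
        (π ^ 2 / 6 - ∑ i ∈ Finset.range 1, (1 : ℝ) / ((i : ℝ)) ^ 2) :=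
      ((hasSum_nat_add_iff' (f := fun n : ℕ => (1 : ℝ) / ((n : ℝ)) ^ 2) 1).mpr h0)
    simp only [Finset.range_one, Finset.sum_singleton, Nat.cast_zero] at h1
    norm_num at h1
    have h2 := h1.mul_left (x / (1 - x))
    refine h2.congr_fun fun j => ?_
    push_cast
    ring
  have hcolle : ∀ j : ℕ, x ^ (j + 1) / (1 - x ^ (j + 1)) / (j + 1)
      ≤ x / (1 - x) * (1 / ((j : ℝ) + 1) ^ 2) := by
    intro j
    have hkey := aux_key x hx0 hx1.le j
    have hj1 : (0:ℝ) < (j : ℝ) + 1 := by positivity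
    rw [div_div, div_le_iff₀ (mul_pos (hpos j) hj1)]
    have hxj : 0 ≤ x ^ j := pow_nonneg hx0 j
    have hexp : x ^ (j + 1) = x ^ j * x := by ring
    have h3 : x ^ j * x * (((j:ℝ)+1) * ((j:ℝ)+1)) * (1 - x)
        ≤ x * ((1 - x ^ (j+1)) * ((j:ℝ)+1)) := by
      nlinarith [mul_le_mul_of_nonneg_left hkey (mul_nonneg hx0 hj1.le)]
    calc x ^ (j + 1) = x ^ j * x := hexp
      _ = x ^ j * x * 1 := by ring
      _ ≤ x / (1 - x) * (1 / ((j:ℝ) + 1) ^ 2) * ((1 - x ^ (j + 1)) * ((j:ℝ) + 1)) := by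
          rw [div_mul_div_comm, div_mul_eq_mul_div, le_div_iff₀ (by positivity : (0:ℝ) < (1 - x) * ((j:ℝ) + 1) ^ 2)]
          calc x ^ j * x * 1 * ((1 - x) * ((j:ℝ)+1)^2)
              = x ^ j * x * (((j:ℝ)+1) * ((j:ℝ)+1)) * (1 - x) := by ring
            _ ≤ x * ((1 - x ^ (j+1)) * ((j:ℝ)+1)) := h3
            _ = x * 1 * ((1 - x ^ (j + 1)) * ((j:ℝ) + 1)) := by ring
  have hLHSsum : Summable (fun j : ℕ => x ^ (j + 1) / (1 - x ^ (j + 1)) / (j + 1)) :=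
    Summable.of_nonneg_of_le
      (fun j => div_nonneg (div_nonneg (hxi0 j) (hpos j).le) (by positivity))
      hcolle hzeta.summable
  -- chain of equalities
  have e1 : ∑' i : ℕ, -Real.log (1 - x ^ (i + 1)) = ∑' i : ℕ, ∑' j : ℕ, f i j :=
    tsum_congr fun i => (hrow i).tsum_eq.symm
  have e2 : ∑' i : ℕ, ∑' j : ℕ, f i j = ∑' j : ℕ, ∑' i : ℕ, f i j := (Summable.tsum_comm hF).symm
  have e3 : ∑' j : ℕ, ∑' i : ℕ, f i j
      = ∑' j : ℕ, x ^ (j + 1) / (1 - x ^ (j + 1)) / (j + 1) :=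
    tsum_congr fun j => (hcol j).tsum_eq
  have hmain : ∑' i : ℕ, -Real.log (1 - x ^ (i + 1)) ≤ π ^ 2 / (6 * (1 - x)) := by
    rw [e1, e2, e3]
    calc ∑' j : ℕ, x ^ (j + 1) / (1 - x ^ (j + 1)) / (j + 1)
        ≤ ∑' j : ℕ, x / (1 - x) * (1 / ((j : ℝ) + 1) ^ 2) :=
          Summable.tsum_le_tsum hcolle hLHSsum hzeta.summable
      _ = x / (1 - x) * (π ^ 2 / 6) := hzeta.tsum_eq
      _ ≤ π ^ 2 / (6 * (1 - x)) := by
          have h7 : x / (1 - x) ≤ 1 / (1 - x) := by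
            rw [div_le_div_iff₀ h1x h1x]; nlinarith
          calc x / (1 - x) * (π ^ 2 / 6) ≤ 1 / (1 - x) * (π ^ 2 / 6) :=
                mul_le_mul_of_nonneg_right h7 (by positivity)
            _ = π ^ 2 / (6 * (1 - x)) := by
                rw [div_mul_div_comm, one_mul, mul_comm]
  have h4 : ∑' i : ℕ, -Real.log (1 - x ^ (i + 1))
      = -∑' i : ℕ, Real.log (1 - x ^ (i + 1)) := tsum_neg
  rw [h4] at hmain
  rw [neg_div]
  linarith
end

section
/- Let D be a distribution on {-1,1}^n that is symmetric (invariant under permutation of coordinates) and k-wise uniform. Then there exists a symmetric k-wise uniform distribution D' on {-1,1}^n such that the support of ∑_i D'_i is a subset of the support of ∑_i D_i of size at most k+1. -/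
/-- The Hamming weight `∑ i, x_i ∈ {-1,1}` of a string. -/
noncomputable def pmWeight {n : ℕ} (x : Fin n → Bool) : ℝ := ∑ i, pmSign (x i)

/-- The set of weights on which a distribution (given by its mass function) is supported. -/
noncomputable def weightSupport {n : ℕ} (p : (Fin n → Bool) → ℝ) : Finset ℝ :=
  (Finset.univ.filter (fun x => p x ≠ 0)).image pmWeight

/-- number of `true` coordinates -/
def cnt {n : ℕ} (x : Fin n → Bool) : ℕ := (Finset.univ.filter (fun i => x i = true)).card

lemma cnt_le {n : ℕ} (x : Fin n → Bool) : cnt x ≤ n := by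
  simpa [cnt] using Finset.card_filter_le Finset.univ (fun i => x i = true)

lemma pmWeight_eq {n : ℕ} (x : Fin n → Bool) : pmWeight x = 2 * (cnt x : ℝ) - n := by
  classical
  have key : ∀ i, pmSign (x i) = (if x i = true then (1:ℝ) else 0) * 2 - 1 := by
    intro i; cases h : x i <;> simp [pmSign, h] <;> norm_num
  unfold pmWeight
  rw [Finset.sum_congr rfl (fun i _ => key i)]
  simp only [Finset.sum_sub_distrib, Finset.sum_const, Finset.card_univ, Fintype.card_fin,
    nsmul_eq_mul, mul_one, ← Finset.sum_mul, Finset.sum_boole]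
  unfold cnt
  ring

lemma cnt_comp_perm {n : ℕ} (x : Fin n → Bool) (σ : Equiv.Perm (Fin n)) :
    cnt (x ∘ σ) = cnt x := by
  classical
  have : Fintype.card {i // x (σ i) = true} = Fintype.card {j // x j = true} :=
    Fintype.card_congr (σ.subtypeEquiv (fun i => Iff.rfl))
  simpa [cnt, Fintype.card_subtype] using this

lemma exists_perm_of_cnt_eq {n : ℕ} (x y : Fin n → Bool) (h : cnt x = cnt y) :
    ∃ σ : Equiv.Perm (Fin n), x ∘ σ = y := by
  classical
  have hcard : Fintype.card {i // y i = true} = Fintype.card {i // x i = true} := by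
    simp only [Fintype.card_subtype]
    exact (h.symm : cnt y = cnt x)
  refine ⟨(Fintype.equivOfCardEq hcard).extendSubtype, funext fun i => ?_⟩
  by_cases hi : y i = true
  · have := (Fintype.equivOfCardEq hcard).extendSubtype_mem i hi
    simp [Function.comp, this, hi]
  · have := (Fintype.equivOfCardEq hcard).extendSubtype_not_mem i hi
    simp only [Function.comp]
    simp only [Bool.not_eq_true] at this hi
    rw [this, hi]

lemma exists_perm_image {n : ℕ} (S S' : Finset (Fin n)) (h : S.card = S'.card) :
    ∃ σ : Equiv.Perm (Fin n), S'.image σ = S := by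
  classical
  have hcard : Fintype.card {i // i ∈ S'} = Fintype.card {i // i ∈ S} := by
    rw [Fintype.card_coe, Fintype.card_coe]
    exact h.symm
  refine ⟨(Fintype.equivOfCardEq hcard).extendSubtype, ?_⟩
  apply Finset.eq_of_subset_of_card_le
  · intro j hj
    simp only [Finset.mem_image] at hj
    obtain ⟨i, hi, rfl⟩ := hj
    exact (Fintype.equivOfCardEq hcard).extendSubtype_mem i hi
  · rw [Finset.card_image_of_injective _ (Equiv.injective _)]
    exact h.le

/-- Any symmetric `k`-wise uniform distribution on `{-1,1}^n` can be sparsified to a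
symmetric `k`-wise uniform distribution supported on at most `k+1` Hamming weights,
all of which occur in the original distribution. -/
theorem stmt_6 (n k : ℕ) (p : (Fin n → Bool) → ℝ)
    (hnonneg : ∀ x, 0 ≤ p x) (hsum : ∑ x, p x = 1)
    (hsymm : ∀ (σ : Equiv.Perm (Fin n)) (x : Fin n → Bool), p (x ∘ σ) = p x)
    (huniform : ∀ S : Finset (Fin n), 0 < S.card → S.card ≤ k →
      ∑ x, p x * ∏ i ∈ S, pmSign (x i) = 0) :
    ∃ p' : (Fin n → Bool) → ℝ,
      (∀ x, 0 ≤ p' x) ∧ (∑ x, p' x = 1) ∧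
      (∀ (σ : Equiv.Perm (Fin n)) (x : Fin n → Bool), p' (x ∘ σ) = p' x) ∧
      (∀ S : Finset (Fin n), 0 < S.card → S.card ≤ k →
        ∑ x, p' x * ∏ i ∈ S, pmSign (x i) = 0) ∧
      weightSupport p' ⊆ weightSupport p ∧ (weightSupport p').card ≤ k + 1 := by
  classical
  by_cases hbig : (weightSupport p).card ≤ k + 1
  · exact ⟨p, hnonneg, hsum, hsymm, huniform, Finset.Subset.refl _, hbig⟩
  push_neg at hbig
  set C : ℕ → Finset (Fin n → Bool) := fun m => Finset.univ.filter (fun x => cnt x = m) with hC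
  have hfiber : ∀ f : (Fin n → Bool) → ℝ,
      ∑ x, f x = ∑ m ∈ Finset.range (n+1), ∑ x ∈ C m, f x := by
    intro f
    exact (Finset.sum_fiberwise_of_maps_to
      (fun x _ => Finset.mem_range.2 (Nat.lt_succ_of_le (cnt_le x))) f).symm
  have hconst : ∀ x y : Fin n → Bool, cnt x = cnt y → p x = p y := by
    intro x y hxy
    obtain ⟨σ, hσ⟩ := exists_perm_of_cnt_eq x y hxy
    rw [← hσ, hsymm]
  set q : ℕ → ℝ := fun m => ∑ x ∈ C m, p x with hq
  set N : ℕ → ℕ := fun m => (C m).card with hN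
  have hScard : ∀ j ≤ n, (Finset.univ.filter (fun i : Fin n => (i:ℕ) < j)).card = j := by
    intro j hj
    have he : Finset.univ.filter (fun i : Fin n => (i:ℕ) < j)
        = (Finset.range j).attachFin
          (fun m hm => lt_of_lt_of_le (Finset.mem_range.1 hm) hj) := by
      ext i; simp [Finset.mem_attachFin]
    rw [he, Finset.card_attachFin, Finset.card_range]
  have hCex : ∀ m ≤ n, (fun i : Fin n => decide ((i : ℕ) < m)) ∈ C m := by
    intro m hm
    simp only [hC, Finset.mem_filter, Finset.mem_univ, true_and]
    unfold cnt
    simp only [decide_eq_true_eq]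
    exact hScard m hm
  have hNpos : ∀ m ≤ n, 0 < N m := fun m hm => Finset.card_pos.2 ⟨_, hCex m hm⟩
  have hp_eq : ∀ x, p x = q (cnt x) / N (cnt x) := by
    intro x
    have hx : x ∈ C (cnt x) := by simp [hC]
    have hqx : q (cnt x) = (N (cnt x) : ℝ) * p x := by
      have : ∀ y ∈ C (cnt x), p y = p x := by
        intro y hy
        simp only [hC, Finset.mem_filter] at hy
        exact hconst y x hy.2
      calc q (cnt x) = ∑ y ∈ C (cnt x), p y := rfl
        _ = ∑ _y ∈ C (cnt x), p x := Finset.sum_congr rfl this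
        _ = (N (cnt x) : ℝ) * p x := by
            rw [Finset.sum_const, nsmul_eq_mul]
    have hNne : (N (cnt x) : ℝ) ≠ 0 := by
      exact_mod_cast (hNpos (cnt x) (cnt_le x)).ne'
    rw [hqx]
    field_simp
  set Sc : ℕ → Finset (Fin n) := fun j => Finset.univ.filter (fun i : Fin n => (i:ℕ) < j)
    with hSc
  set μ : ℕ → ℕ → ℝ := fun m j => ∑ x ∈ C m, ∏ i ∈ Sc j, pmSign (x i) with hμ
  have hSinv : ∀ (m : ℕ) (S : Finset (Fin n)),
      ∑ x ∈ C m, ∏ i ∈ S, pmSign (x i) = μ m S.card := by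
    intro m S
    have hSn : S.card ≤ n := by simpa using Finset.card_le_univ S
    obtain ⟨σ, hσ⟩ := exists_perm_image (Sc S.card) S (by rw [hSc]; exact hScard S.card hSn)
    have hbij : Function.Bijective (fun x : Fin n → Bool => x ∘ σ) := by
      constructor
      · intro a b hab
        funext i
        have := congrFun hab (σ.symm i)
        simpa using this
      · intro y
        exact ⟨y ∘ σ.symm, by funext i; simp⟩
    have key := Fintype.sum_bijective (fun x : Fin n → Bool => x ∘ σ) hbij
      (fun x => if cnt x = m then ∏ i ∈ Sc S.card, pmSign (x i) else 0)
      (fun y => if cnt y = m then ∏ i ∈ S, pmSign (y i) else 0)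
      (fun x => by
        beta_reduce
        rw [cnt_comp_perm]
        by_cases hx : cnt x = m
        · simp only [hx, if_true]
          rw [← hσ, Finset.prod_image (fun a _ b _ hab => σ.injective hab)]
          rfl
        · simp [hx])
    rw [← Finset.sum_filter, ← Finset.sum_filter] at key
    exact key.symm
  have hmom : ∀ (g : ℕ → ℝ) (S : Finset (Fin n)),
      ∑ x, g (cnt x) * ∏ i ∈ S, pmSign (x i)
        = ∑ m ∈ Finset.range (n+1), g m * μ m S.card := by
    intro g S
    rw [hfiber (fun x => g (cnt x) * ∏ i ∈ S, pmSign (x i))]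
    refine Finset.sum_congr rfl (fun m _ => ?_)
    have h1 : ∑ x ∈ C m, g (cnt x) * ∏ i ∈ S, pmSign (x i)
        = g m * ∑ x ∈ C m, ∏ i ∈ S, pmSign (x i) := by
      rw [Finset.mul_sum]
      refine Finset.sum_congr rfl (fun x hx => ?_)
      simp only [hC, Finset.mem_filter] at hx
      rw [hx.2]
    rw [h1, hSinv]
  have hqsum : ∑ m ∈ Finset.range (n+1), q m = 1 := by
    rw [← hfiber p]; exact hsum
  -- bound: k + 1 ≤ n
  have hws_le : (weightSupport p).card ≤ n + 1 := by
    have hsub : weightSupport p ⊆ (Finset.range (n+1)).image (fun m : ℕ => 2*(m:ℝ) - n) := by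
      intro w hw
      simp only [weightSupport, Finset.mem_image, Finset.mem_filter] at hw
      obtain ⟨x, hx, rfl⟩ := hw
      exact Finset.mem_image.2 ⟨cnt x, Finset.mem_range.2 (Nat.lt_succ_of_le (cnt_le x)),
        (pmWeight_eq x).symm⟩
    calc (weightSupport p).card ≤ _ := Finset.card_le_card hsub
      _ ≤ (Finset.range (n+1)).card := Finset.card_image_le
      _ = n + 1 := Finset.card_range _
  have hkn : k + 1 ≤ n := by omega
  have hpu : ∀ j, 0 < j → j ≤ k →
      ∑ m ∈ Finset.range (n+1), (q m / N m) * μ m j = 0 := by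
    intro j hj1 hj2
    have hjn : j ≤ n := by omega
    have hSj : (Sc j).card = j := by rw [hSc]; exact hScard j hjn
    have hu := huniform (Sc j) (by rw [hSj]; exact hj1) (by rw [hSj]; exact hj2)
    rw [Finset.sum_congr rfl (fun x _ => by rw [hp_eq x])] at hu
    rw [hmom (fun m => q m / N m) (Sc j), hSj] at hu
    exact hu
  set v : ℕ → (Fin k → ℝ) := fun m j => μ m ((j : ℕ)+1) / N m with hv
  set M : Finset ℕ := (Finset.range (n+1)).filter (fun m => q m ≠ 0) with hMdef
  have hq0 : ∀ m, 0 ≤ q m := fun m => Finset.sum_nonneg (fun x _ => hnonneg x)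
  have hMsum : ∑ m ∈ M, q m = 1 := by
    rw [hMdef, Finset.sum_filter_ne_zero]; exact hqsum
  have hMv0 : ∑ m ∈ M, q m • v m = 0 := by
    have hext : ∑ m ∈ M, q m • v m = ∑ m ∈ Finset.range (n+1), q m • v m := by
      rw [hMdef]
      refine Finset.sum_filter_of_ne (fun m _ hne => ?_)
      intro hq'
      exact hne (by rw [hq', zero_smul])
    rw [hext]
    funext j
    rw [Finset.sum_apply]
    simp only [Pi.smul_apply, smul_eq_mul, Pi.zero_apply, hv]
    have := hpu ((j : ℕ)+1) (Nat.succ_pos _) (by omega)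
    rw [← this]
    exact Finset.sum_congr rfl (fun m _ => by ring)
  have h0 : (0 : Fin k → ℝ) ∈ convexHull ℝ (↑(M.image v) : Set (Fin k → ℝ)) := by
    have hmem := Finset.centerMass_mem_convexHull M (w := q)
      (fun m _ => hq0 m) (by rw [hMsum]; exact one_pos) (z := v)
      (fun m hm => Finset.mem_coe.2 (Finset.mem_image_of_mem v hm))
    rwa [Finset.centerMass_eq_of_sum_1 _ _ hMsum, hMv0] at hmem
  rw [convexHull_eq_union] at h0
  simp only [Set.mem_iUnion] at h0
  obtain ⟨t, hts, hai, h0t⟩ := h0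
  have htcard : t.card ≤ k + 1 := by
    have h1 := hai.card_le_finrank_succ
    have h2 : Module.finrank ℝ (vectorSpan ℝ (Set.range ((↑) : t → (Fin k → ℝ))))
        ≤ Module.finrank ℝ (Fin k → ℝ) := Submodule.finrank_le _
    rw [Module.finrank_fin_fun] at h2
    rw [Fintype.card_coe] at h1
    omega
  rw [Finset.convexHull_eq] at h0t
  obtain ⟨w, hw0, hw1, hwc⟩ := h0t
  rw [Finset.centerMass_eq_of_sum_1 _ _ hw1] at hwc
  have hsec : ∀ e : Fin k → ℝ, ∃ m, e ∈ t → m ∈ M ∧ v m = e := by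
    intro e
    by_cases he : e ∈ t
    · obtain ⟨m, hm, hme⟩ := Finset.mem_image.1 (Finset.mem_coe.1 (hts he))
      exact ⟨m, fun _ => ⟨hm, hme⟩⟩
    · exact ⟨0, fun h => absurd h he⟩
  choose g hg using hsec
  set M' : Finset ℕ := t.image g with hM'def
  have hM'M : M' ⊆ M := by
    intro m hm
    obtain ⟨e, he, rfl⟩ := Finset.mem_image.1 hm
    exact (hg e he).1
  have hM'card : M'.card ≤ k + 1 := le_trans Finset.card_image_le htcard
  set β : ℕ → ℝ := fun m => ∑ e ∈ t.filter (fun e => g e = m), w e with hβdef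
  have hgmap : ∀ e ∈ t, g e ∈ M' := fun e he => Finset.mem_image_of_mem g he
  have hβsum : ∑ m ∈ M', β m = 1 := by
    rw [hβdef]
    rw [Finset.sum_fiberwise_of_maps_to hgmap w]
    exact hw1
  have hβ0 : ∀ m, 0 ≤ β m :=
    fun m => Finset.sum_nonneg (fun e he => hw0 e (Finset.mem_filter.1 he).1)
  have hβv : ∑ m ∈ M', β m • v m = 0 := by
    have h1 : ∑ m ∈ M', β m • v m
        = ∑ m ∈ M', ∑ e ∈ t.filter (fun e => g e = m), w e • v (g e) := by
      refine Finset.sum_congr rfl (fun m _ => ?_)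
      rw [hβdef, Finset.sum_smul]
      refine Finset.sum_congr rfl (fun e he => ?_)
      rw [(Finset.mem_filter.1 he).2]
    rw [h1, Finset.sum_fiberwise_of_maps_to hgmap (fun e => w e • v (g e))]
    have h2 : ∀ e ∈ t, w e • v (g e) = w e • e := by
      intro e he
      rw [(hg e he).2]
    rw [Finset.sum_congr rfl h2]
    simpa using hwc
  set βt : ℕ → ℝ := fun m => if m ∈ M' then β m else 0 with hβt
  have hβt0 : ∀ m, 0 ≤ βt m := fun m => by
    by_cases h : m ∈ M' <;> simp [hβt, h, hβ0 m]
  set p' : (Fin n → Bool) → ℝ := fun x => βt (cnt x) / N (cnt x) with hp'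
  have hβtrange : ∑ m ∈ Finset.range (n+1), βt m = ∑ m ∈ M', β m := by
    simp only [hβt]
    rw [Finset.sum_ite_mem]
    congr 1
    exact Finset.inter_eq_right.2 (fun m hm => Finset.mem_filter.1 (hM'M hm) |>.1)
  have hsupp : ∀ x, p' x ≠ 0 → cnt x ∈ M' := by
    intro x hx
    by_contra hc
    exact hx (by simp [hp', hβt, hc])
  refine ⟨p', ?_, ?_, ?_, ?_, ?_, ?_⟩
  · intro x
    exact div_nonneg (hβt0 _) (Nat.cast_nonneg _)
  · rw [hfiber p']
    have : ∀ m ∈ Finset.range (n+1), ∑ x ∈ C m, p' x = βt m := by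
      intro m hm
      have hmn : m ≤ n := by
        have := Finset.mem_range.1 hm; omega
      have : ∀ x ∈ C m, p' x = βt m / N m := by
        intro x hx
        simp only [hC, Finset.mem_filter] at hx
        simp only [hp', hx.2]
      rw [Finset.sum_congr rfl this, Finset.sum_const, nsmul_eq_mul]
      have hNcard : ((C m).card : ℝ) = (N m : ℝ) := rfl
      have hNne : (N m : ℝ) ≠ 0 := by exact_mod_cast (hNpos m hmn).ne'
      rw [hNcard]
      field_simp
    rw [Finset.sum_congr rfl this, hβtrange, hβsum]
  · intro σ x
    simp only [hp', cnt_comp_perm]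
  · intro S hS1 hS2
    have hrw : ∀ x, p' x = (fun m => βt m / N m) (cnt x) := fun x => rfl
    rw [Finset.sum_congr rfl (fun x _ => by rw [hrw x])]
    rw [hmom (fun m => βt m / N m) S]
    have hcollapse : ∑ m ∈ Finset.range (n+1), βt m / N m * μ m S.card
        = ∑ m ∈ M', β m / N m * μ m S.card := by
      have : ∀ m ∈ Finset.range (n+1), βt m / N m * μ m S.card
          = if m ∈ M' then β m / N m * μ m S.card else 0 := by
        intro m _
        by_cases hmem : m ∈ M' <;> simp [hβt, hmem]
      rw [Finset.sum_congr rfl this, Finset.sum_ite_mem,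
        Finset.inter_eq_right.2 (fun m hm => Finset.mem_filter.1 (hM'M hm) |>.1)]
    rw [hcollapse]
    have hjlt : S.card - 1 < k := by omega
    have hcomp := congrFun hβv ⟨S.card - 1, hjlt⟩
    rw [Finset.sum_apply] at hcomp
    simp only [Pi.smul_apply, smul_eq_mul, Pi.zero_apply, hv] at hcomp
    have hidx : S.card - 1 + 1 = S.card := by omega
    rw [hidx] at hcomp
    rw [← hcomp]
    exact Finset.sum_congr rfl (fun m _ => by ring)
  · intro wgt hw
    simp only [weightSupport, Finset.mem_image, Finset.mem_filter, Finset.mem_univ,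
      true_and] at hw ⊢
    obtain ⟨x, hx, rfl⟩ := hw
    have hxM : cnt x ∈ M := hM'M (hsupp x hx)
    have hqne : q (cnt x) ≠ 0 := (Finset.mem_filter.1 hxM).2
    obtain ⟨y, hy, hyne⟩ := Finset.exists_ne_zero_of_sum_ne_zero hqne
    refine ⟨y, hyne, ?_⟩
    simp only [hC, Finset.mem_filter] at hy
    rw [pmWeight_eq, pmWeight_eq, hy.2]
  · have hsub : weightSupport p' ⊆ M'.image (fun m : ℕ => 2*(m:ℝ) - n) := by
      intro wgt hw
      simp only [weightSupport, Finset.mem_image, Finset.mem_filter, Finset.mem_univ,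
        true_and] at hw
      obtain ⟨x, hx, rfl⟩ := hw
      exact Finset.mem_image.2 ⟨cnt x, hsupp x hx, (pmWeight_eq x).symm⟩
    calc (weightSupport p').card ≤ _ := Finset.card_le_card hsub
      _ ≤ M'.card := Finset.card_image_le
      _ ≤ k + 1 := hM'card
end

section
/- Let V = Vand(x_0,…,x_k) be the (k+1)×(k+1) Vandermonde matrix with entries V_{i,j} = x_{j-1}^{i-1}, with all x_a distinct. Let X̃_{j,i} denote V with the j-th row and i-th column removed, and X̃_{k+1,i} be V with its last row and i-th column removed. Then det(X̃_{j,i}) / det(X̃_{k+1,i}) = e_{k+1-j}(x_0,…,x_{i-2}, x_i,…,x_k), where e_m denotes the elementary symmetric polynomial of degree m in k variables. -/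
open Polynomial Matrix Finset in
/-- Key identity: the minor obtained by deleting row `j` from the `(k+1)×k`
Vandermonde-power matrix equals `e_{k-j}` times the full `k×k` Vandermonde. -/
theorem vand_minor_eq (k : ℕ) (y : Fin k → ℝ) (j : Fin (k + 1)) :
    Matrix.det (fun r c : Fin k => y c ^ ((j.succAbove r : ℕ))) =
      ((Finset.univ.val.map y).esymm (k - (j : ℕ))) *
        Matrix.det (fun r c : Fin k => y c ^ (r : ℕ)) := by
  set D : ℝ := Matrix.det (fun r c : Fin k => y c ^ (r : ℕ)) with hD
  set v : Fin (k + 1) → ℝ[X] := Fin.cons X (fun c => C (y c)) with hv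
  set A : Matrix (Fin (k + 1)) (Fin (k + 1)) ℝ[X] := fun r c => v c ^ (r : ℕ) with hA
  have hDval : D = ∏ i : Fin k, ∏ jj ∈ Finset.Ioi i, (y jj - y i) := by
    rw [hD, ← Matrix.det_vandermonde y, ← Matrix.det_transpose]
    congr 1
  -- Step (b): factorization of `det A`
  have hb : A.det = (∏ c : Fin k, (C (y c) - X)) * C D := by
    apply Polynomial.funext
    intro t
    have hmap : A.map (Polynomial.eval t) =
        (Matrix.vandermonde (Fin.cons t y : Fin (k+1) → ℝ))ᵀ := by
      ext r c
      refine Fin.cases ?_ (fun c => ?_) c <;>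
        (rw [Matrix.map_apply]; simp [hA, hv, Matrix.vandermonde])
    have h1 : Polynomial.eval t A.det = ((Matrix.vandermonde (Fin.cons t y)))ᵀ.det := by
      rw [← hmap]
      exact (RingHom.map_det (Polynomial.evalRingHom t) A)
    rw [h1, Matrix.det_transpose, Matrix.det_vandermonde, Fin.prod_univ_succ]
    simp only [Fin.prod_Ioi_zero, Fin.prod_Ioi_succ, Fin.cons_succ, Fin.cons_zero,
      Polynomial.eval_mul, Polynomial.eval_prod, Polynomial.eval_sub,
      Polynomial.eval_C, Polynomial.eval_X]
    rw [hDval]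
  -- Step (a): Laplace expansion along the first column
  have hsub : ∀ r : Fin (k + 1),
      (A.submatrix r.succAbove Fin.succ).det =
        C (Matrix.det (fun a b : Fin k => y b ^ ((r.succAbove a : ℕ)))) := by
    intro r
    refine Eq.trans ?_ (RingHom.map_det (C : ℝ →+* ℝ[X]) _).symm
    congr 1
    funext a b
    show A (r.succAbove a) b.succ = C (y b ^ (r.succAbove a : ℕ))
    simp [hA, hv, Matrix.submatrix]
  have ha : A.det = ∑ r : Fin (k + 1),
      C ((-1) ^ (r : ℕ) *
        Matrix.det (fun a b : Fin k => y b ^ ((r.succAbove a : ℕ)))) * X ^ (r : ℕ) := by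
    rw [Matrix.det_succ_column_zero]
    refine Finset.sum_congr rfl fun r _ => ?_
    rw [hsub r]
    have hA0 : A r 0 = X ^ (r : ℕ) := by simp [hA, hv]
    rw [hA0, Polynomial.C_mul, Polynomial.C_pow, Polynomial.C_neg, Polynomial.C_1]
    ring
  -- compare coefficients at degree `j`
  have hcoeff := congrArg (fun p : ℝ[X] => p.coeff (j : ℕ)) (ha.symm.trans hb)
  simp only [Polynomial.finset_sum_coeff, Polynomial.coeff_C_mul,
    Polynomial.coeff_mul_C, Polynomial.coeff_X_pow] at hcoeff
  have hcl : ∀ r : Fin (k + 1),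
      ((-1 : ℝ) ^ (r : ℕ) * Matrix.det (fun a b : Fin k => y b ^ ((r.succAbove a : ℕ)))) *
        (if (j : ℕ) = (r : ℕ) then (1:ℝ) else 0)
      = if r = j then
          (-1) ^ (r : ℕ) * Matrix.det (fun a b : Fin k => y b ^ ((r.succAbove a : ℕ)))
        else 0 := by
    intro r
    by_cases h : r = j
    · subst h; simp
    · rw [if_neg (fun hh => h (Fin.ext hh.symm)), mul_zero, if_neg h]
  simp only [hcl, Finset.sum_ite_eq' Finset.univ j, Finset.mem_univ, if_pos] at hcoeff
  -- compute the coefficient of the RHS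
  have hprod : (∏ c : Fin k, (C (y c) - X) : ℝ[X]) =
      C ((-1 : ℝ) ^ k) * ∏ c : Fin k, (X - C (y c)) := by
    have h0 : ∀ c : Fin k, (C (y c) - X : ℝ[X]) = (-1) * (X - C (y c)) := fun c => by ring
    rw [Finset.prod_congr rfl fun c _ => h0 c, Finset.prod_mul_distrib]
    simp [map_pow]
  have hjk : (j : ℕ) ≤ k := Nat.lt_succ_iff.mp j.isLt
  have hesymm : (∏ c : Fin k, (X - C (y c)) : ℝ[X]).coeff (j : ℕ) =
      (-1 : ℝ) ^ (k - (j : ℕ)) * ((Finset.univ.val.map y).esymm (k - (j : ℕ))) := by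
    have h6 := Multiset.prod_X_sub_C_coeff (Finset.univ.val.map y)
      (k := (j : ℕ)) (by simpa using hjk)
    rw [Multiset.map_map] at h6
    simp only [Function.comp_def, Multiset.card_map, Finset.card_val, Finset.card_univ,
      Fintype.card_fin] at h6
    rw [← h6]
    congr 1
  rw [hprod, Polynomial.coeff_C_mul, hesymm] at hcoeff
  have key := hcoeff
  have hk2 : (-1 : ℝ) ^ k * (-1 : ℝ) ^ (k - (j : ℕ)) = (-1 : ℝ) ^ (j : ℕ) := by
    rw [← pow_add]
    have h3 : k + (k - (j : ℕ)) = 2 * (k - (j : ℕ)) + (j : ℕ) := by omega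
    rw [h3, pow_add, pow_mul]
    norm_num
  have hs0 : ((-1 : ℝ) ^ (j : ℕ)) ≠ 0 := pow_ne_zero _ (by norm_num)
  apply mul_left_cancel₀ hs0
  rw [key, ← hk2]
  ring

/-- Ratio of Vandermonde minors: with `V` the `(k+1)×(k+1)` Vandermonde matrix
`V r c = x_c ^ r` at pairwise distinct points, removing row `j` and column `i`
versus removing the last row and column `i` gives the elementary symmetric
polynomial `e_{k-j}` of the points other than `x_i` (0-based indexing). -/
theorem stmt_12 (k : ℕ) (x : Fin (k + 1) → ℝ) (hx : Function.Injective x)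
    (j i : Fin (k + 1)) :
    Matrix.det (fun r c : Fin k => x (i.succAbove c) ^ ((j.succAbove r : ℕ))) /
      Matrix.det (fun r c : Fin k => x (i.succAbove c) ^ (((Fin.last k).succAbove r : ℕ))) =
    ∑ t ∈ (Finset.univ.erase i).powersetCard (k - (j : ℕ)), ∏ a ∈ t, x a := by
  set y : Fin k → ℝ := fun c => x (i.succAbove c) with hy
  have hyinj : Function.Injective y := fun a b h =>
    Fin.succAbove_right_injective (hx h)
  have hden : Matrix.det (fun r c : Fin k => y c ^ (((Fin.last k).succAbove r : ℕ))) =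
      Matrix.det (fun r c : Fin k => y c ^ (r : ℕ)) := by
    congr 1; ext r c; rw [Fin.succAbove_last]; simp
  have hDne : Matrix.det (fun r c : Fin k => y c ^ (r : ℕ)) ≠ 0 := by
    have h4 : Matrix.det (fun r c : Fin k => y c ^ (r : ℕ)) =
        ((Matrix.vandermonde y).transpose).det := by
      congr 1
    rw [h4, Matrix.det_transpose]
    exact Matrix.det_vandermonde_ne_zero_iff.mpr hyinj
  have hwhole : (Finset.univ.erase i).val.map x = Finset.univ.val.map y := by
    have h1 : (Finset.univ : Finset (Fin (k+1))).erase i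
        = Finset.univ.map (Fin.succAboveEmb i) := by
      rw [Fin.univ_succAbove k i, Finset.erase_cons]
    rw [h1, Finset.map_val, Multiset.map_map]
    rfl
  have hrhs : (∑ t ∈ (Finset.univ.erase i).powersetCard (k - (j : ℕ)), ∏ a ∈ t, x a)
      = (Finset.univ.val.map y).esymm (k - (j : ℕ)) := by
    rw [← Finset.esymm_map_val, hwhole]
  rw [hden, hrhs, div_eq_iff hDne]
  exact vand_minor_eq k y j
end

section
/- Let q > 1 and let V = Vand(1, q, q², …, q^k) be the (k+1)×(k+1) Vandermonde matrix at the points q^0,…,q^k. Then the (i,j) entry of the inverse satisfies |(V^{-1})_{i,j}| · ∏_{b=1}^k (q^b - 1) ≤ binom(k, i-1) · binom(k, j-1) · q^{P} for some power P, and in particular (-1)^{i+j}(V^{-1})_{i,j} · ∏_{b=1}^k (q^b - 1) is a sum of binom(k,i-1)·binom(k,j-1) (possibly negative integer) powers of q. -/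
open Finset

def IsSumZPow (q : ℝ) (n : ℕ) (x : ℝ) : Prop := ∃ e : Fin n → ℤ, x = ∑ m, q ^ (e m)

namespace IsSumZPow
variable {q x y : ℝ} {a b : ℕ}

lemma single (z : ℤ) : IsSumZPow q 1 (q ^ z) := ⟨fun _ => z, by simp⟩

lemma cast (h : IsSumZPow q a x) (hab : a = b) : IsSumZPow q b x := hab ▸ h

lemma add (hx : IsSumZPow q a x) (hy : IsSumZPow q b y) : IsSumZPow q (a + b) (x + y) := by
  obtain ⟨e, he⟩ := hx; obtain ⟨f, hf⟩ := hy
  refine ⟨(Sum.elim e f) ∘ finSumFinEquiv.symm, ?_⟩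
  rw [he, hf, ← Equiv.sum_comp finSumFinEquiv (fun m => q ^ ((Sum.elim e f) ∘ finSumFinEquiv.symm) m)]
  simp [Fintype.sum_sum_type]

lemma mul (hx : IsSumZPow q a x) (hy : IsSumZPow q b y) (hq : q ≠ 0) :
    IsSumZPow q (a * b) (x * y) := by
  obtain ⟨e, he⟩ := hx; obtain ⟨f, hf⟩ := hy
  refine ⟨(fun p => e p.1 + f p.2) ∘ finProdFinEquiv.symm, ?_⟩
  rw [he, hf, ← Equiv.sum_comp finProdFinEquiv (fun m => q ^ ((fun p => e p.1 + f p.2) ∘ finProdFinEquiv.symm) m)]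
  simp only [Function.comp_apply, Equiv.symm_apply_apply]
  rw [Finset.sum_mul_sum, Fintype.sum_prod_type]
  simp [zpow_add₀ hq]

lemma sum_finset {α : Type*} (S : Finset α) (g : α → ℤ) :
    IsSumZPow q S.card (∑ t ∈ S, q ^ g t) := by
  refine ⟨fun m => g (S.equivFin.symm m), ?_⟩
  rw [show (∑ t ∈ S, q ^ g t) = ∑ t : S, q ^ g (t : α) from (Finset.sum_attach S (fun t => q ^ g t)).symm,
    ← Equiv.sum_comp S.equivFin.symm (fun t : S => q ^ g (t : α))]

end IsSumZPow

noncomputable def qprod (q : ℝ) (n : ℕ) : ℝ := ∏ b ∈ Icc 1 n, (q ^ b - 1)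

lemma qprod_pos {q : ℝ} (hq : 1 < q) (n : ℕ) : 0 < qprod q n := by
  apply Finset.prod_pos
  intro b hb
  have hb1 : 1 ≤ b := (Finset.mem_Icc.mp hb).1
  have h1 : 1 < q ^ b := one_lt_pow₀ hq (by omega)
  linarith

lemma qprod_succ (q : ℝ) (n : ℕ) : qprod q (n + 1) = qprod q n * (q ^ (n+1) - 1) :=
  Finset.prod_Icc_succ_top (by omega) _

lemma qpow_sub_one_ne {q : ℝ} (hq : 1 < q) (n : ℕ) : q ^ (n+1) - 1 ≠ 0 := by
  have h1 : 1 < q ^ (n+1) := one_lt_pow₀ hq (by omega)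
  linarith

/-- Gaussian binomial as a sum of `n.choose m` powers of `q`. -/
lemma gauss_isSumZPow {q : ℝ} (hq : 1 < q) :
    ∀ n m : ℕ, m ≤ n → IsSumZPow q (n.choose m) (qprod q n / (qprod q m * qprod q (n - m))) := by
  have hq0 : q ≠ 0 := by positivity
  have hP : ∀ t, qprod q t ≠ 0 := fun t => (qprod_pos hq t).ne'
  intro n
  induction n with
  | zero =>
    intro m hm; interval_cases m
    have : qprod q 0 / (qprod q 0 * qprod q 0) = q ^ (0:ℤ) := by simp [qprod]
    rw [Nat.choose_self, this]; exact IsSumZPow.single 0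
  | succ n ih =>
    intro m hm
    rcases Nat.eq_zero_or_pos m with rfl | hm0
    · have : qprod q (n+1) / (qprod q 0 * qprod q (n+1-0)) = q ^ (0:ℤ) := by
        have h0 : qprod q 0 = 1 := by simp [qprod]
        rw [h0, Nat.sub_zero, one_mul, div_self (hP _), zpow_zero]
      rw [Nat.choose_zero_right, this]; exact IsSumZPow.single 0
    rcases eq_or_lt_of_le hm with rfl | hmn
    · have : qprod q (n+1) / (qprod q (n+1) * qprod q (n+1 - (n+1))) = q ^ (0:ℤ) := by
        have h0 : qprod q (n+1-(n+1)) = 1 := by simp [qprod]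
        rw [h0, mul_one, div_self (hP _), zpow_zero]
      rw [Nat.choose_self, this]; exact IsSumZPow.single 0
    -- 1 ≤ m ≤ n
    have hmn' : m ≤ n := by omega
    obtain ⟨m', rfl⟩ : ∃ m', m = m' + 1 := ⟨m - 1, by omega⟩
    obtain ⟨d, hd⟩ : ∃ d, n - m' = d + 1 := ⟨n - m' - 1, by omega⟩
    have hnd : n + 1 - (m' + 1) = d + 1 := by omega
    have hnd2 : n - (m' + 1) = d := by omega
    have key : qprod q (n+1) / (qprod q (m'+1) * qprod q (d+1)) =
        qprod q n / (qprod q m' * qprod q (d+1)) +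
        q ^ ((m':ℤ)+1) * (qprod q n / (qprod q (m'+1) * qprod q d)) := by
      have hsplit : q ^ (n+1) - 1 = (q ^ (m'+1) - 1) + q ^ (m'+1) * (q ^ (d+1) - 1) := by
        have hmul : q ^ (m'+1) * q ^ (d+1) = q ^ (n+1) := by
          rw [← pow_add]; congr 1; omega
        nlinarith [hmul]
      rw [qprod_succ q n, qprod_succ q m', qprod_succ q d, hsplit]
      have h1 := hP n; have h2 := hP m'; have h3 := hP d
      have h4 := qpow_sub_one_ne hq m'
      have h5 := qpow_sub_one_ne hq d
      have hz : q ^ ((m':ℤ)+1) = q ^ (m'+1) := by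
        rw [← zpow_natCast]; norm_num
      rw [hz]
      field_simp
    rw [hnd, key, Nat.choose_succ_succ]
    have t1 := (ih m' (by omega)).cast rfl
    rw [hd] at t1
    have t2 := (ih (m'+1) (by omega)).cast rfl
    rw [hnd2] at t2
    exact t1.add ((((IsSumZPow.single ((m':ℤ)+1)).mul t2 hq0).cast (one_mul _)))
open Polynomial
section
variable {k : ℕ} {q : ℝ}

lemma vinj (hq : 1 < q) : Set.InjOn (fun c : Fin (k+1) => q ^ (c:ℕ)) ↑(univ : Finset (Fin (k+1))) := by
  intro a _ b _ h
  simp only at h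
  have : (a:ℕ) = (b:ℕ) := by
    by_contra hne
    rcases Nat.lt_or_ge (a:ℕ) (b:ℕ) with hl | hl
    · exact absurd h (ne_of_lt (pow_lt_pow_right₀ hq hl))
    · have : (b:ℕ) < a := by omega
      exact absurd h.symm (ne_of_lt (pow_lt_pow_right₀ hq this))
  exact Fin.ext this

lemma vand_inv (hq : 1 < q) :
    (show Matrix (Fin (k+1)) (Fin (k+1)) ℝ from fun r c => q ^ ((c:ℕ) * (r:ℕ)))⁻¹ =
      Matrix.of fun i j : Fin (k+1) =>
        (Lagrange.basis univ (fun c : Fin (k+1) => q ^ (c:ℕ)) i).coeff j := by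
  set v : Fin (k+1) → ℝ := fun c => q ^ (c:ℕ) with hv
  apply Matrix.inv_eq_left_inv
  ext i j
  rw [Matrix.mul_apply, Matrix.one_apply]
  have hdeg : (Lagrange.basis univ v i).natDegree < k + 1 := by
    have hd := Lagrange.degree_basis (vinj hq) (mem_univ i)
    have hnd := Polynomial.natDegree_eq_of_degree_eq_some hd
    rw [hnd, Finset.card_univ, Fintype.card_fin]
    omega
  have heval := Polynomial.eval_eq_sum_range' hdeg (v j)
  have hsum : ∑ r : Fin (k+1), (Lagrange.basis univ v i).coeff r * q ^ ((j:ℕ) * (r:ℕ))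
      = (Lagrange.basis univ v i).eval (v j) := by
    rw [heval, ← Fin.sum_univ_eq_sum_range (fun r => (Lagrange.basis univ v i).coeff r * v j ^ r)]
    refine Finset.sum_congr rfl fun r _ => ?_
    rw [hv]; simp only [pow_mul]
  simp only [Matrix.of_apply]
  rw [hsum]
  by_cases hij : i = j
  · subst hij; rw [if_pos rfl, Lagrange.eval_basis_self (vinj hq) (mem_univ i)]
  · rw [if_neg hij, Lagrange.eval_basis_of_ne hij (mem_univ j)]

lemma basis_coeff (hq : 1 < q) (i j : Fin (k+1)) :
    (Lagrange.basis univ (fun c : Fin (k+1) => q ^ (c:ℕ)) i).coeff j =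
      (∏ m ∈ univ.erase i, (q ^ (i:ℕ) - q ^ (m:ℕ)))⁻¹ *
        ((-1) ^ (k - (j:ℕ)) *
          ∑ t ∈ (univ.erase i).powersetCard (k - (j:ℕ)), ∏ m ∈ t, q ^ (m:ℕ)) := by
  set v : Fin (k+1) → ℝ := fun c => q ^ (c:ℕ) with hv
  have hcard : #(univ.erase i) = k := by rw [card_erase_of_mem (mem_univ i)]; simp
  have hbasis : Lagrange.basis univ v i =
      C (∏ m ∈ univ.erase i, (v i - v m))⁻¹ * ∏ m ∈ univ.erase i, (X - C (v m)) := by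
    rw [Lagrange.basis]
    simp only [Lagrange.basisDivisor]
    rw [Finset.prod_mul_distrib, ← map_prod, Finset.prod_inv_distrib]
  rw [hbasis, coeff_C_mul]
  congr 1
  have hmm : (∏ m ∈ univ.erase i, (X - C (v m))) =
      (((univ.erase i).1.map v).map fun t => X - C t).prod := by
    rw [Multiset.map_map]; rfl
  have hjk : (j:ℕ) ≤ Multiset.card ((univ.erase i).1.map v) := by
    rw [Multiset.card_map]
    show (j:ℕ) ≤ #(univ.erase i)
    rw [hcard]; omega
  rw [hmm, Multiset.prod_X_sub_C_coeff _ hjk]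
  rw [Multiset.card_map]
  have hc2 : Multiset.card (univ.erase i).val = k := hcard
  rw [hc2, Finset.esymm_map_val]

end
variable {k : ℕ} {q : ℝ}

lemma qprod_eq_range (q : ℝ) (n : ℕ) : qprod q n = ∏ t ∈ range n, (q ^ (1 + t) - 1) := by
  rw [qprod, ← Finset.Ico_add_one_right_eq_Icc, Finset.prod_Ico_eq_prod_range]
  simp

lemma denom_prod (hq : 1 < q) (i : Fin (k+1)) :
    ∏ m ∈ univ.erase i, (q ^ (i:ℕ) - q ^ (m:ℕ)) =
      (-1) ^ (k - (i:ℕ)) * q ^ ((∑ m ∈ range (i:ℕ), m) + (i:ℕ) * (k - (i:ℕ))) *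
        (qprod q (i:ℕ) * qprod q (k - (i:ℕ))) := by
  have hq0 : (q:ℝ) ≠ 0 := by positivity
  have hi : (i:ℕ) ≤ k := by omega
  have hmap : (univ.erase i).map Fin.valEmbedding = (range (k+1)).erase (i:ℕ) := by
    rw [Finset.map_erase, Fin.map_valEmbedding_univ]
    simp [Nat.Iio_eq_range]
  have h1 : ∏ m ∈ univ.erase i, (q ^ (i:ℕ) - q ^ (m:ℕ)) =
      ∏ m ∈ (range (k+1)).erase (i:ℕ), (q ^ (i:ℕ) - q ^ m) := by
    rw [← hmap, Finset.prod_map]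
    rfl
  have h2 : (range (k+1)).erase (i:ℕ) = range (i:ℕ) ∪ Ico ((i:ℕ)+1) (k+1) := by
    ext a
    simp only [mem_erase, mem_range, mem_union, mem_Ico]
    omega
  have hdisj : Disjoint (range (i:ℕ)) (Ico ((i:ℕ)+1) (k+1)) := by
    rw [Finset.disjoint_left]
    intro a ha hb
    simp only [mem_range] at ha
    simp only [mem_Ico] at hb
    omega
  rw [h1, h2, Finset.prod_union hdisj]
  have hlow : ∏ m ∈ range (i:ℕ), (q ^ (i:ℕ) - q ^ m) =
      q ^ (∑ m ∈ range (i:ℕ), m) * qprod q (i:ℕ) := by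
    have : ∀ m ∈ range (i:ℕ), q ^ (i:ℕ) - q ^ m = q ^ m * (q ^ ((i:ℕ) - m) - 1) := by
      intro m hm
      simp only [mem_range] at hm
      rw [mul_sub, mul_one, ← pow_add]
      congr 2
      omega
    rw [Finset.prod_congr rfl this, Finset.prod_mul_distrib, Finset.prod_pow_eq_pow_sum]
    congr 1
    rw [qprod_eq_range]
    rw [← Finset.prod_range_reflect (fun t => q ^ (1 + t) - 1) (i:ℕ)]
    refine Finset.prod_congr rfl fun m hm => ?_
    simp only [mem_range] at hm
    congr 2
    omega
  have hhigh : ∏ m ∈ Ico ((i:ℕ)+1) (k+1), (q ^ (i:ℕ) - q ^ m) =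
      (-1) ^ (k - (i:ℕ)) * q ^ ((i:ℕ) * (k - (i:ℕ))) * qprod q (k - (i:ℕ)) := by
    rw [Finset.prod_Ico_eq_prod_range]
    have hc : k + 1 - ((i:ℕ) + 1) = k - (i:ℕ) := by omega
    rw [hc]
    have : ∀ t ∈ range (k - (i:ℕ)), q ^ (i:ℕ) - q ^ ((i:ℕ) + 1 + t) =
        (-1) * (q ^ (i:ℕ) * (q ^ (1 + t) - 1)) := by
      intro t ht
      have : q ^ ((i:ℕ) + 1 + t) = q ^ (i:ℕ) * q ^ (1 + t) := by
        rw [← pow_add]; congr 1; omega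
      rw [this]; ring
    rw [Finset.prod_congr rfl this, Finset.prod_mul_distrib, Finset.prod_mul_distrib,
      Finset.prod_const, Finset.prod_const, Finset.card_range, qprod_eq_range, ← pow_mul]
    ring
  rw [hlow, hhigh, pow_add]
  ring

/-- Entries of the inverse of the Vandermonde matrix at `1, q, …, q^k` (for `q > 1`):
`(-1)^{i+j} (V⁻¹)_{i,j} ∏_{b=1}^k (q^b - 1)` is a sum of `C(k,i)·C(k,j)` integer powers
of `q` (0-based indexing), and in particular `|(V⁻¹)_{i,j}| ∏_{b=1}^k (q^b - 1)` is at
most `C(k,i)·C(k,j)·q^P` for some integer power `P`. -/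
theorem stmt_13 (k : ℕ) (q : ℝ) (hq : 1 < q) (i j : Fin (k + 1)) :
    let V : Matrix (Fin (k + 1)) (Fin (k + 1)) ℝ := fun r c => q ^ ((c : ℕ) * (r : ℕ))
    (∃ P : ℤ, |V⁻¹ i j| * ∏ b ∈ Finset.Icc 1 k, (q ^ b - 1) ≤
        (k.choose i * k.choose j : ℕ) * q ^ P) ∧
    ∃ e : Fin (k.choose i * k.choose j) → ℤ,
      (-1 : ℝ) ^ ((i : ℕ) + (j : ℕ)) * V⁻¹ i j * ∏ b ∈ Finset.Icc 1 k, (q ^ b - 1) =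
        ∑ m, q ^ (e m) := by
  intro V
  have hq0 : q ≠ 0 := by positivity
  have hi : (i:ℕ) ≤ k := by omega
  have hj : (j:ℕ) ≤ k := by omega
  have hPk : (∏ b ∈ Finset.Icc 1 k, (q ^ b - 1)) = qprod q k := rfl
  -- the explicit formula for the inverse entry
  have hVinv : V⁻¹ = Matrix.of fun i j : Fin (k+1) =>
      (Lagrange.basis univ (fun c : Fin (k+1) => q ^ (c:ℕ)) i).coeff j := vand_inv hq
  set S : ℝ := ∑ t ∈ (univ.erase i).powersetCard (k - (j:ℕ)), ∏ m ∈ t, q ^ (m:ℕ) with hSdef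
  set T : ℕ := (∑ m ∈ range (i:ℕ), m) + (i:ℕ) * (k - (i:ℕ)) with hTdef
  have hentry : V⁻¹ i j =
      ((-1) ^ (k - (i:ℕ)) * q ^ T * (qprod q (i:ℕ) * qprod q (k - (i:ℕ))))⁻¹ *
        ((-1) ^ (k - (j:ℕ)) * S) := by
    rw [hVinv]
    show (Lagrange.basis univ (fun c : Fin (k+1) => q ^ (c:ℕ)) i).coeff j = _
    rw [basis_coeff hq i j, denom_prod hq i]
  -- sign bookkeeping
  have hsign : ((-1:ℝ)) ^ ((i:ℕ)+(j:ℕ)) * ((-1:ℝ)) ^ (k-(j:ℕ)) * ((-1:ℝ)) ^ (k-(i:ℕ)) = 1 := by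
    rw [← pow_add, ← pow_add, show ((i:ℕ)+(j:ℕ)) + (k-(j:ℕ)) + (k-(i:ℕ)) = 2*k by omega,
      pow_mul]
    norm_num
  have hcinv : (((-1:ℝ)) ^ (k-(i:ℕ)))⁻¹ = ((-1:ℝ)) ^ (k-(i:ℕ)) := by
    rw [← inv_pow]; norm_num
  have hmain : (-1:ℝ) ^ ((i:ℕ)+(j:ℕ)) * V⁻¹ i j * qprod q k =
      (q ^ T)⁻¹ * ((qprod q k / (qprod q (i:ℕ) * qprod q (k - (i:ℕ)))) * S) := by
    rw [hentry, mul_inv, mul_inv, hcinv, div_eq_mul_inv]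
    have expand : (-1:ℝ) ^ ((i:ℕ)+(j:ℕ)) *
        ((-1:ℝ) ^ (k-(i:ℕ)) * (q ^ T)⁻¹ * (qprod q (i:ℕ) * qprod q (k - (i:ℕ)))⁻¹ *
          ((-1:ℝ) ^ (k-(j:ℕ)) * S)) * qprod q k =
        ((-1:ℝ) ^ ((i:ℕ)+(j:ℕ)) * (-1:ℝ) ^ (k-(j:ℕ)) * (-1:ℝ) ^ (k-(i:ℕ))) *
          ((q ^ T)⁻¹ * ((qprod q k * (qprod q (i:ℕ) * qprod q (k - (i:ℕ)))⁻¹) * S)) := by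
      ring
    rw [expand, hsign, one_mul]
  -- S is a sum of `k.choose j` powers
  have hS : IsSumZPow q (k.choose (j:ℕ)) S := by
    have hcards : #((univ.erase i).powersetCard (k - (j:ℕ))) = k.choose (j:ℕ) := by
      rw [card_powersetCard, card_erase_of_mem (mem_univ i), card_univ, Fintype.card_fin,
        Nat.add_sub_cancel, Nat.choose_symm hj]
    have hform : S = ∑ t ∈ (univ.erase i).powersetCard (k - (j:ℕ)),
        q ^ ((∑ m ∈ t, (m:ℕ) : ℕ) : ℤ) := by
      rw [hSdef]
      refine Finset.sum_congr rfl fun t _ => ?_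
      rw [Finset.prod_pow_eq_pow_sum, zpow_natCast]
    rw [hform]
    exact (IsSumZPow.sum_finset _ _).cast hcards
  have hG : IsSumZPow q (k.choose (i:ℕ))
      (qprod q k / (qprod q (i:ℕ) * qprod q (k - (i:ℕ)))) := gauss_isSumZPow hq k (i:ℕ) hi
  have hT1 : IsSumZPow q 1 ((q ^ T)⁻¹) := by
    have : (q ^ T)⁻¹ = q ^ (-(T:ℤ)) := by rw [zpow_neg, zpow_natCast]
    rw [this]; exact IsSumZPow.single _
  have hfull : IsSumZPow q (k.choose (i:ℕ) * k.choose (j:ℕ))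
      ((-1:ℝ) ^ ((i:ℕ)+(j:ℕ)) * V⁻¹ i j * qprod q k) := by
    rw [hmain]
    exact ((hT1.mul (hG.mul hS hq0) hq0).cast (one_mul _))
  obtain ⟨e, he⟩ := hfull
  constructor
  · -- the bound
    have hNpos : 0 < k.choose (i:ℕ) * k.choose (j:ℕ) :=
      Nat.mul_pos (Nat.choose_pos hi) (Nat.choose_pos hj)
    have hne : (univ : Finset (Fin (k.choose (i:ℕ) * k.choose (j:ℕ)))).Nonempty :=
      ⟨⟨0, hNpos⟩, mem_univ _⟩
    refine ⟨univ.sup' hne e, ?_⟩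
    have habs : |V⁻¹ i j| * qprod q k = ∑ m, q ^ (e m) := by
      have h1 : |(-1:ℝ) ^ ((i:ℕ)+(j:ℕ)) * V⁻¹ i j * qprod q k| = |V⁻¹ i j| * qprod q k := by
        rw [abs_mul, abs_mul, abs_pow, abs_neg, abs_one, one_pow, one_mul,
          abs_of_pos (qprod_pos hq k)]
      rw [← h1, he, abs_of_nonneg]
      exact Finset.sum_nonneg fun m _ => (zpow_pos (lt_trans one_pos hq) _).le
    rw [hPk, habs]
    calc ∑ m, q ^ (e m) ≤ ∑ _m : Fin (k.choose (i:ℕ) * k.choose (j:ℕ)), q ^ (univ.sup' hne e) :=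
          Finset.sum_le_sum fun m _ => zpow_le_zpow_right₀ hq.le (Finset.le_sup' e (mem_univ m))
      _ = (k.choose (i:ℕ) * k.choose (j:ℕ) : ℕ) * q ^ (univ.sup' hne e) := by
          rw [Finset.sum_const, card_univ, Fintype.card_fin, nsmul_eq_mul]
  · exact ⟨e, by rw [hPk]; exact he⟩
end

section
/- Let q > 1, k a positive integer, and let A be the inverse of the (k+1)×(k+1) Hankel matrix M with entries M_{i,j} = q^{(i+j-k-2)²}. Then for all i,j, |A_{i,j}| ≤ binom(k,i-1)·binom(k,j-1) / ∏_{b=1}^k (1 - q^{-2b}). -/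
open Finset Polynomial

/-- sum of a nodup finset of naturals of card r is at least 0+1+...+(r-1) -/
lemma sum_finset_nat_ge (S : Finset ℕ) : ∑ i ∈ range S.card, i ≤ ∑ i ∈ S, i := by
  generalize hn : S.card = n
  induction n generalizing S with
  | zero => simp
  | succ n ih =>
    have hne : S.Nonempty := by
      rw [← Finset.card_pos, hn]; omega
    set M := S.max' hne with hM
    have hMS : M ∈ S := S.max'_mem hne
    have hMn : n ≤ M := by
      have hsub : S ⊆ range (M + 1) := by
        intro a ha
        simp only [mem_range]
        exact Nat.lt_succ_of_le (S.le_max' a ha)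
      have := Finset.card_le_card hsub
      rw [hn, card_range] at this
      omega
    have hcard : (S.erase M).card = n := by
      rw [Finset.card_erase_of_mem hMS, hn]
      omega
    have hrec := ih (S.erase M) hcard
    rw [Finset.sum_range_succ, ← Finset.sum_erase_add S _ hMS]
    omega

lemma prod_zpow_eq_zpow_sum {q : ℝ} (hq : q ≠ 0) {α : Type*} (s : Finset α) (f : α → ℤ) :
    ∏ m ∈ s, q ^ (f m) = q ^ (∑ m ∈ s, f m) := by
  induction s using Finset.cons_induction with
  | empty => simp
  | cons a s ha ih => rw [Finset.prod_cons, Finset.sum_cons, ih, zpow_add₀ hq]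

/-- Gaussian binomial bound: `[n choose j]_t ≤ C(n,j)` for `0 ≤ t ≤ 1`. -/
lemma gauss_bound {t : ℝ} (h0 : 0 ≤ t) (h1 : t ≤ 1) :
    ∀ n j, j ≤ n → ∏ b ∈ Finset.Icc 1 n, (1 - t ^ b) ≤
      (n.choose j : ℝ) * ((∏ b ∈ Finset.Icc 1 j, (1 - t ^ b)) * ∏ b ∈ Finset.Icc 1 (n - j), (1 - t ^ b)) := by
  have hfac : ∀ b : ℕ, 0 ≤ 1 - t ^ b := fun b => by
    have := pow_le_one₀ h0 h1 (n := b); linarith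
  have hprodpos : ∀ m : ℕ, 0 ≤ ∏ b ∈ Icc 1 m, (1 - t ^ b) :=
    fun m => Finset.prod_nonneg fun b _ => hfac b
  have hstep : ∀ m : ℕ, ∏ b ∈ Icc 1 (m + 1), (1 - t ^ b)
      = (1 - t ^ (m + 1)) * ∏ b ∈ Icc 1 m, (1 - t ^ b) := fun m => by
    rw [← Finset.Ico_add_one_right_eq_Icc, Finset.prod_Ico_succ_top (by omega), ← Finset.Ico_add_one_right_eq_Icc, mul_comm]
  intro n
  induction n with
  | zero => intro j hj; interval_cases j; norm_num
  | succ n ih =>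
    intro j hj
    rcases Nat.eq_zero_or_pos j with rfl | hj0
    · norm_num
    rcases eq_or_lt_of_le hj with rfl | hjn
    · norm_num
    have hjn' : j ≤ n := by omega
    obtain ⟨m, rfl⟩ : ∃ m, j = m + 1 := ⟨j - 1, by omega⟩
    have key : (1 : ℝ) - t ^ (n + 1) = (1 - t ^ (m + 1)) + t ^ (m + 1) * (1 - t ^ (n - m)) := by
      have : t ^ (m + 1) * t ^ (n - m) = t ^ (n + 1) := by
        rw [← pow_add]; congr 1; omega
      linarith [this]
    have ih1 := ih m (by omega)
    have ih2 := ih (m + 1) hjn'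
    have e1 : (1 - t ^ (m+1)) * ∏ b ∈ Icc 1 n, (1 - t ^ b)
        ≤ (n.choose m : ℝ) * ((∏ b ∈ Icc 1 (m+1), (1 - t ^ b)) * ∏ b ∈ Icc 1 (n - m), (1 - t ^ b)) := by
      rw [hstep m]
      calc (1 - t ^ (m+1)) * ∏ b ∈ Icc 1 n, (1 - t ^ b)
          ≤ (1 - t ^ (m+1)) * ((n.choose m : ℝ) * ((∏ b ∈ Icc 1 m, (1 - t ^ b)) * ∏ b ∈ Icc 1 (n - m), (1 - t ^ b))) :=
            mul_le_mul_of_nonneg_left ih1 (hfac (m+1))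
        _ = (n.choose m : ℝ) * ((1 - t ^ (m+1)) * (∏ b ∈ Icc 1 m, (1 - t ^ b)) * ∏ b ∈ Icc 1 (n - m), (1 - t ^ b)) := by ring
    have e2 : t ^ (m+1) * (1 - t ^ (n - m)) * ∏ b ∈ Icc 1 n, (1 - t ^ b)
        ≤ (n.choose (m+1) : ℝ) * ((∏ b ∈ Icc 1 (m+1), (1 - t ^ b)) * ∏ b ∈ Icc 1 (n - m), (1 - t ^ b)) := by
      have hw : n - m = (n - (m+1)) + 1 := by omega
      have htp : 0 ≤ t ^ (m+1) * (1 - t ^ (n - m)) := mul_nonneg (pow_nonneg h0 _) (hfac _)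
      have step1 : t ^ (m+1) * (1 - t ^ (n - m)) * ∏ b ∈ Icc 1 n, (1 - t ^ b)
          ≤ t ^ (m+1) * (1 - t ^ (n - m)) * ((n.choose (m+1) : ℝ) * ((∏ b ∈ Icc 1 (m+1), (1 - t ^ b)) * ∏ b ∈ Icc 1 (n - (m+1)), (1 - t ^ b))) :=
        mul_le_mul_of_nonneg_left ih2 htp
      have step2 : t ^ (m+1) * (1 - t ^ (n - m)) * ((n.choose (m+1) : ℝ) * ((∏ b ∈ Icc 1 (m+1), (1 - t ^ b)) * ∏ b ∈ Icc 1 (n - (m+1)), (1 - t ^ b)))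
          = t ^ (m+1) * ((n.choose (m+1) : ℝ) * ((∏ b ∈ Icc 1 (m+1), (1 - t ^ b)) * ∏ b ∈ Icc 1 (n - m), (1 - t ^ b))) := by
        rw [hw, hstep (n - (m+1))]
        ring
      have step3 : t ^ (m+1) * ((n.choose (m+1) : ℝ) * ((∏ b ∈ Icc 1 (m+1), (1 - t ^ b)) * ∏ b ∈ Icc 1 (n - m), (1 - t ^ b)))
          ≤ 1 * ((n.choose (m+1) : ℝ) * ((∏ b ∈ Icc 1 (m+1), (1 - t ^ b)) * ∏ b ∈ Icc 1 (n - m), (1 - t ^ b))) := by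
        apply mul_le_mul_of_nonneg_right (pow_le_one₀ h0 h1)
        exact mul_nonneg (Nat.cast_nonneg _) (mul_nonneg (hprodpos _) (hprodpos _))
      calc t ^ (m+1) * (1 - t ^ (n - m)) * ∏ b ∈ Icc 1 n, (1 - t ^ b)
          ≤ t ^ (m+1) * ((n.choose (m+1) : ℝ) * ((∏ b ∈ Icc 1 (m+1), (1 - t ^ b)) * ∏ b ∈ Icc 1 (n - m), (1 - t ^ b))) := step2 ▸ step1
        _ ≤ 1 * ((n.choose (m+1) : ℝ) * ((∏ b ∈ Icc 1 (m+1), (1 - t ^ b)) * ∏ b ∈ Icc 1 (n - m), (1 - t ^ b))) := step3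
        _ = (n.choose (m+1) : ℝ) * ((∏ b ∈ Icc 1 (m+1), (1 - t ^ b)) * ∏ b ∈ Icc 1 (n - m), (1 - t ^ b)) := one_mul _
    calc ∏ b ∈ Icc 1 (n + 1), (1 - t ^ b)
        = (1 - t ^ (m+1)) * ∏ b ∈ Icc 1 n, (1 - t ^ b)
          + t ^ (m+1) * (1 - t ^ (n - m)) * ∏ b ∈ Icc 1 n, (1 - t ^ b) := by
          rw [hstep n, key]; ring
      _ ≤ ((n.choose m : ℝ) + (n.choose (m+1) : ℝ)) * ((∏ b ∈ Icc 1 (m+1), (1 - t ^ b)) * ∏ b ∈ Icc 1 (n - m), (1 - t ^ b)) := by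
          rw [add_mul]
          exact add_le_add e1 e2
      _ = (((n+1).choose (m+1) : ℕ) : ℝ) * ((∏ b ∈ Icc 1 (m+1), (1 - t ^ b)) * ∏ b ∈ Icc 1 (n - m), (1 - t ^ b)) := by
          rw [Nat.choose_succ_succ]
          push_cast
          ring
      _ = (((n+1).choose (m+1) : ℕ) : ℝ) * ((∏ b ∈ Icc 1 (m+1), (1 - t ^ b)) * ∏ b ∈ Icc 1 (n + 1 - (m+1)), (1 - t ^ b)) := by
          rw [Nat.succ_sub_succ]

open Finset Polynomial

noncomputable def ynode (k : ℕ) (q : ℝ) (m : ℕ) : ℝ := q ^ (2 * ((m : ℤ) - k))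

lemma ynode_pos {k : ℕ} {q : ℝ} (hq : 0 < q) (m : ℕ) : 0 < ynode k q m :=
  zpow_pos hq _

lemma ynode_strictMono {k : ℕ} {q : ℝ} (hq : 1 < q) : StrictMono (ynode k q) := by
  intro a b hab
  apply zpow_lt_zpow_right₀ hq
  omega

lemma abs_ynode_sub {k : ℕ} {q : ℝ} (hq : 1 < q) {a b : ℕ} (hab : a ≠ b) :
    |ynode k q a - ynode k q b|
      = q ^ (2 * (max a b : ℤ) - 2 * k) * (1 - q ^ (-2 * ((max a b : ℤ) - (min a b : ℤ)))) := by
  have hq0 : q ≠ 0 := by positivity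
  wlog h : b < a generalizing a b
  · have h' : a < b := by omega
    rw [abs_sub_comm, this (Ne.symm hab) h', max_comm, min_comm]
  rw [max_eq_left (by exact_mod_cast h.le : (b:ℤ) ≤ a), min_eq_right (by exact_mod_cast h.le : (b:ℤ) ≤ a)]
  have hlt : ynode k q b < ynode k q a := ynode_strictMono hq h
  rw [abs_of_pos (by linarith), mul_sub, mul_one, ← zpow_add₀ hq0]
  unfold ynode
  congr 2
  · push_cast; ring
  · push_cast; ring

lemma prod_erase_fin {M : Type*} [CommMonoid M] {k : ℕ} (G : ℕ → M) (j : Fin (k + 1)) :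
    ∏ m ∈ Finset.univ.erase j, G (m : ℕ) = ∏ m ∈ (Finset.range (k + 1)).erase (j : ℕ), G m := by
  rw [show (Finset.range (k + 1)).erase (j : ℕ)
      = (Finset.univ.erase j).map ⟨Fin.val, Fin.val_injective⟩ from ?_, Finset.prod_map]
  · rfl
  · ext m
    simp only [Finset.mem_erase, Finset.mem_range, Finset.mem_map, Function.Embedding.coeFn_mk,
      Finset.mem_univ, and_true]
    constructor
    · rintro ⟨h1, h2⟩
      exact ⟨⟨m, h2⟩, fun hc => h1 (congrArg Fin.val hc), rfl⟩
    · rintro ⟨a, ha, rfl⟩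
      exact ⟨fun hc => ha (Fin.ext hc), a.isLt⟩

lemma erase_range_split {k j : ℕ} (hj : j ≤ k) :
    (Finset.range (k + 1)).erase j = Finset.range j ∪ Finset.Ico (j + 1) (k + 1) := by
  ext m
  simp only [Finset.mem_erase, Finset.mem_range, Finset.mem_union, Finset.mem_Ico]
  omega

lemma disjoint_range_Ico {k j : ℕ} :
    Disjoint (Finset.range j) (Finset.Ico (j + 1) (k + 1)) := by
  rw [Finset.disjoint_left]
  intro a ha hb
  simp only [Finset.mem_range] at ha
  simp only [Finset.mem_Ico] at hb
  omega

lemma prod_range_reindex {M : Type*} [CommMonoid M] (G : ℕ → M) (j : ℕ) :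
    ∏ m ∈ Finset.range j, G (j - m) = ∏ d ∈ Finset.Icc 1 j, G d := by
  apply Finset.prod_nbij' (fun m => j - m) (fun d => j - d)
  · intro a ha; simp only [Finset.mem_range] at ha; simp only [Finset.mem_Icc]; omega
  · intro a ha; simp only [Finset.mem_Icc] at ha; simp only [Finset.mem_range]; omega
  · intro a ha; simp only [Finset.mem_range] at ha; omega
  · intro a ha; simp only [Finset.mem_Icc] at ha; omega
  · intro a _; rfl

lemma prod_Ico_reindex {M : Type*} [CommMonoid M] (G : ℕ → M) (j k : ℕ) :
    ∏ m ∈ Finset.Ico (j + 1) (k + 1), G (m - j) = ∏ d ∈ Finset.Icc 1 (k - j), G d := by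
  apply Finset.prod_nbij' (fun m => m - j) (fun d => d + j)
  · intro a ha; simp only [Finset.mem_Ico] at ha; simp only [Finset.mem_Icc]; omega
  · intro a ha; simp only [Finset.mem_Icc] at ha; simp only [Finset.mem_Ico]; omega
  · intro a ha; simp only [Finset.mem_Ico] at ha; omega
  · intro a ha; simp only [Finset.mem_Icc] at ha; omega
  · intro a _; rfl
section main
variable {k : ℕ} {q : ℝ}

lemma num_bound (hq : 1 < q) (i : Fin (k + 1)) (j : Fin (k + 1)) :
    |(∏ m ∈ Finset.univ.erase j, (X - C (ynode k q (m : ℕ)))).coeff (i : ℕ)|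
      ≤ (k.choose (i : ℕ) : ℝ) * q ^ (-(((k - (i:ℕ)) * (k - (i:ℕ) - 1) : ℕ) : ℤ)) := by
  have hq0 : (0:ℝ) < q := lt_trans one_pos hq
  set s : Finset (Fin (k+1)) := Finset.univ.erase j with hs
  have hcard : #s = k := by
    rw [hs, Finset.card_erase_of_mem (Finset.mem_univ j), Finset.card_univ, Fintype.card_fin]
    omega
  have hik : (i : ℕ) ≤ k := by omega
  set r : ℕ := k - (i : ℕ) with hr
  have hrw : ∏ m ∈ s, (X - C (ynode k q (m : ℕ)))
      = ∏ m ∈ s, (X + C ((fun m : Fin (k+1) => -(ynode k q (m : ℕ))) m)) := by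
    refine Finset.prod_congr rfl fun m _ => ?_
    rw [map_neg, sub_eq_add_neg]
  rw [hrw, Finset.prod_X_add_C_coeff s _ (by rw [hcard]; exact hik)]
  rw [hcard]
  have hbound : ∀ T ∈ Finset.powersetCard r s,
      |∏ m ∈ T, (-(ynode k q (m : ℕ)))| ≤ q ^ (-((r * (r - 1) : ℕ) : ℤ)) := by
    intro T hT
    rw [Finset.mem_powersetCard] at hT
    obtain ⟨hTs, hTcard⟩ := hT
    rw [Finset.abs_prod]
    have habs : ∀ m ∈ T, |(-(ynode k q (m : ℕ)))| = ynode k q (m : ℕ) := fun m _ => by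
      rw [abs_neg, abs_of_pos (ynode_pos hq0 _)]
    rw [Finset.prod_congr rfl habs]
    unfold ynode
    rw [prod_zpow_eq_zpow_sum (ne_of_gt hq0)]
    apply zpow_le_zpow_right₀ hq.le
    -- ∑ m ∈ T, (2 * ((m:ℤ) - k)) ≤ -(r*(r-1))
    have hinj : Set.InjOn (fun m : Fin (k+1) => k - (m : ℕ)) T := by
      intro a _ b _ hab
      simp only at hab
      have ha := a.isLt
      have hb := b.isLt
      exact Fin.ext (by omega)
    have hS : (T.image (fun m : Fin (k+1) => k - (m : ℕ))).card = r := by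
      rw [Finset.card_image_of_injOn hinj, hTcard]
    have h1 := sum_finset_nat_ge (T.image (fun m : Fin (k+1) => k - (m : ℕ)))
    rw [hS, Finset.sum_image hinj] at h1
    have h2 := Finset.sum_range_id_mul_two r
    -- h1 : ∑ i ∈ range r, i ≤ ∑ m ∈ T, (k - m)
    -- so r * (r-1) ≤ 2 * ∑ (k - m)
    have h3 : (r * (r - 1) : ℕ) ≤ 2 * ∑ m ∈ T, (k - (m : ℕ)) := by omega
    have h4 : (2 * ∑ m ∈ T, (k - (m : ℕ)) : ℤ) = - ∑ m ∈ T, (2 * ((m : ℤ) - k)) := by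
      push_cast
      rw [Finset.mul_sum, ← Finset.sum_neg_distrib]
      refine Finset.sum_congr rfl fun m _ => ?_
      have : (m : ℕ) ≤ k := by omega
      push_cast [Nat.cast_sub this]
      ring
    have h5 : ((r * (r - 1) : ℕ) : ℤ) ≤ - ∑ m ∈ T, (2 * ((m : ℤ) - k)) := by
      rw [← h4]; exact_mod_cast h3
    omega
  calc |∑ T ∈ Finset.powersetCard (k - (i:ℕ)) s, ∏ m ∈ T, (-(ynode k q (m : ℕ)))|
      ≤ ∑ T ∈ Finset.powersetCard (k - (i:ℕ)) s, |∏ m ∈ T, (-(ynode k q (m : ℕ)))| :=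
        Finset.abs_sum_le_sum_abs _ _
    _ ≤ ∑ _T ∈ Finset.powersetCard (k - (i:ℕ)) s, q ^ (-((r * (r - 1) : ℕ) : ℤ)) :=
        Finset.sum_le_sum hbound
    _ = (Finset.powersetCard r s).card * q ^ (-((r * (r - 1) : ℕ) : ℤ)) := by
        rw [Finset.sum_const, nsmul_eq_mul]
    _ = (k.choose (i : ℕ) : ℝ) * q ^ (-((r * (r - 1) : ℕ) : ℤ)) := by
        rw [Finset.card_powersetCard, hcard, Nat.choose_symm hik]

end main

lemma sum_two_mul_Ico (j : ℕ) : ∀ k, j ≤ k →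
    ∑ m ∈ Finset.Ico (j+1) (k+1), (2*(m:ℤ)) = k*(k+1) - j*(j+1) := by
  refine Nat.le_induction ?_ ?_
  · simp
  · intro n hn ih
    rw [show n + 1 + 1 = (n + 1) + 1 from rfl, Finset.sum_Ico_succ_top (by omega), ih]
    push_cast
    ring

lemma den_eq {k : ℕ} {q : ℝ} (hq : 1 < q) (j : Fin (k + 1)) :
    ∏ m ∈ Finset.univ.erase j, |ynode k q (j : ℕ) - ynode k q (m : ℕ)|
      = q ^ ((j:ℤ) * ((j:ℤ) - 1) - (k:ℤ) * ((k:ℤ) - 1)) *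
        ((∏ d ∈ Finset.Icc 1 (j:ℕ), (1 - q ^ (-2 * (d:ℤ)))) *
          ∏ d ∈ Finset.Icc 1 (k - (j:ℕ)), (1 - q ^ (-2 * (d:ℤ)))) := by
  have hq0 : (0:ℝ) < q := lt_trans one_pos hq
  have hqne : q ≠ 0 := ne_of_gt hq0
  have hjk : (j : ℕ) ≤ k := by omega
  rw [prod_erase_fin (fun n => |ynode k q (j : ℕ) - ynode k q n|) j,
    erase_range_split hjk, Finset.prod_union disjoint_range_Ico]
  have part1 : ∏ m ∈ Finset.range (j:ℕ), |ynode k q (j:ℕ) - ynode k q m|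
      = q ^ ((2 * (j:ℤ) - 2 * k) * (j:ℕ)) * ∏ d ∈ Finset.Icc 1 (j:ℕ), (1 - q ^ (-2 * (d:ℤ))) := by
    have hterm : ∀ m ∈ Finset.range (j:ℕ), |ynode k q (j:ℕ) - ynode k q m|
        = q ^ (2 * (j:ℤ) - 2 * k) * (1 - q ^ (-2 * (((j:ℕ) - m : ℕ) : ℤ))) := by
      intro m hm
      rw [Finset.mem_range] at hm
      rw [abs_ynode_sub hq (by omega)]
      rw [max_eq_left (by exact_mod_cast hm.le : (m:ℤ) ≤ (j:ℕ)),
        min_eq_right (by exact_mod_cast hm.le : (m:ℤ) ≤ (j:ℕ))]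
      congr 2
      push_cast [Nat.cast_sub hm.le]
      ring
    rw [Finset.prod_congr rfl hterm, Finset.prod_mul_distrib, Finset.prod_const,
      Finset.card_range, ← zpow_natCast (q ^ (2 * (j:ℤ) - 2 * (k:ℤ))), ← zpow_mul]
    congr 1
    exact prod_range_reindex (fun d => 1 - q ^ (-2 * (d:ℤ))) (j:ℕ)
  have part2 : ∏ m ∈ Finset.Ico ((j:ℕ)+1) (k+1), |ynode k q (j:ℕ) - ynode k q m|
      = q ^ (∑ m ∈ Finset.Ico ((j:ℕ)+1) (k+1), (2 * (m:ℤ) - 2 * k)) *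
        ∏ d ∈ Finset.Icc 1 (k - (j:ℕ)), (1 - q ^ (-2 * (d:ℤ))) := by
    have hterm : ∀ m ∈ Finset.Ico ((j:ℕ)+1) (k+1), |ynode k q (j:ℕ) - ynode k q m|
        = q ^ (2 * (m:ℤ) - 2 * k) * (1 - q ^ (-2 * ((m - (j:ℕ) : ℕ) : ℤ))) := by
      intro m hm
      rw [Finset.mem_Ico] at hm
      have hjm : (j:ℕ) < m := by omega
      rw [abs_ynode_sub hq (by omega)]
      rw [max_eq_right (by exact_mod_cast hjm.le : ((j:ℕ):ℤ) ≤ m),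
        min_eq_left (by exact_mod_cast hjm.le : ((j:ℕ):ℤ) ≤ m)]
      congr 2
      push_cast [Nat.cast_sub hjm.le]
      ring
    rw [Finset.prod_congr rfl hterm, Finset.prod_mul_distrib,
      prod_zpow_eq_zpow_sum hqne]
    congr 1
    exact prod_Ico_reindex (fun d => 1 - q ^ (-2 * (d:ℤ))) (j:ℕ) k
  rw [part1, part2]
  have hexp : (2 * (j:ℤ) - 2 * k) * (j:ℕ) + ∑ m ∈ Finset.Ico ((j:ℕ)+1) (k+1), (2 * (m:ℤ) - 2 * k)
      = (j:ℤ) * ((j:ℤ) - 1) - (k:ℤ) * ((k:ℤ) - 1) := by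
    have hsub : ∑ m ∈ Finset.Ico ((j:ℕ)+1) (k+1), (2 * (m:ℤ) - 2 * k)
        = (∑ m ∈ Finset.Ico ((j:ℕ)+1) (k+1), (2 * (m:ℤ))) - ((k:ℤ) - (j:ℕ)) * (2 * k) := by
      rw [Finset.sum_sub_distrib, Finset.sum_const, Nat.card_Ico, nsmul_eq_mul]
      congr 1
      push_cast [Nat.cast_sub hjk]
      ring
    rw [hsub, sum_two_mul_Ico (j:ℕ) k hjk]
    ring
  calc q ^ ((2 * (j:ℤ) - 2 * k) * (j:ℕ)) * (∏ d ∈ Finset.Icc 1 (j:ℕ), (1 - q ^ (-2 * (d:ℤ)))) *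
        (q ^ (∑ m ∈ Finset.Ico ((j:ℕ)+1) (k+1), (2 * (m:ℤ) - 2 * k)) *
          ∏ d ∈ Finset.Icc 1 (k - (j:ℕ)), (1 - q ^ (-2 * (d:ℤ))))
      = (q ^ ((2 * (j:ℤ) - 2 * k) * (j:ℕ)) * q ^ (∑ m ∈ Finset.Ico ((j:ℕ)+1) (k+1), (2 * (m:ℤ) - 2 * k))) *
        ((∏ d ∈ Finset.Icc 1 (j:ℕ), (1 - q ^ (-2 * (d:ℤ)))) *
          ∏ d ∈ Finset.Icc 1 (k - (j:ℕ)), (1 - q ^ (-2 * (d:ℤ)))) := by ring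
    _ = q ^ ((j:ℤ) * ((j:ℤ) - 1) - (k:ℤ) * ((k:ℤ) - 1)) *
        ((∏ d ∈ Finset.Icc 1 (j:ℕ), (1 - q ^ (-2 * (d:ℤ)))) *
          ∏ d ∈ Finset.Icc 1 (k - (j:ℕ)), (1 - q ^ (-2 * (d:ℤ)))) := by
        rw [← zpow_add₀ hqne, hexp]

lemma int_sq_add_self_nonneg (x : ℤ) : 0 ≤ x ^ 2 + x := by
  rcases le_or_gt 0 x with h | h
  · nlinarith
  · have hx : x ≤ -1 := by omega
    nlinarith

/-- Bound on the entries of the inverse of the Hankel matrix `M_{i,j} = q^{(i+j-k)²}`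
(0-based indexing over `Fin (k+1)`, so `i+j-k` ranges over `-k, …, k`): for `q > 1`,
`|A_{i,j}| ≤ C(k,i)·C(k,j) / ∏_{b=1}^k (1 - q^{-2b})` where `A = M⁻¹`. -/
theorem stmt_15 (k : ℕ) (hk : 0 < k) (q : ℝ) (hq : 1 < q) (i j : Fin (k + 1)) :
    let M : Matrix (Fin (k + 1)) (Fin (k + 1)) ℝ :=
      fun i j => q ^ (((i : ℤ) + (j : ℤ) - k) ^ 2)
    |M⁻¹ i j| ≤ (k.choose i * k.choose j : ℕ) /
      ∏ b ∈ Finset.Icc 1 k, (1 - q ^ (-(2 * (b : ℤ)))) := by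
  intro M
  have hM : M = fun a b : Fin (k+1) => q ^ (((a : ℤ) + (b : ℤ) - k) ^ 2) := rfl
  have hq0 : (0:ℝ) < q := lt_trans one_pos hq
  have hqne : q ≠ 0 := ne_of_gt hq0
  set x : Fin (k + 1) → ℝ := fun m => ynode k q (m : ℕ) with hx
  have hxinj : Function.Injective x := by
    intro a b hab
    have h2 := (ynode_strictMono (k := k) (q := q) hq).injective hab
    exact Fin.ext h2
  have hinjOn : Set.InjOn x ↑(Finset.univ : Finset (Fin (k+1))) := fun a _ b _ h => hxinj h
  set P : Fin (k + 1) → ℝ[X] := fun l => Lagrange.basis Finset.univ x l with hP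
  set B : Matrix (Fin (k + 1)) (Fin (k + 1)) ℝ :=
    fun a b => q ^ (-((a:ℤ))^2) * (P b).coeff (a : ℕ) * q ^ (-(((b:ℤ) - k)^2)) with hB
  have hdeg : ∀ l, (P l).natDegree < k + 1 := fun l => by
    rw [hP]
    rw [Lagrange.natDegree_basis hinjOn (Finset.mem_univ l), Finset.card_univ, Fintype.card_fin]
    omega
  -- M * B = 1
  have hMB : M * B = 1 := by
    ext a l
    rw [Matrix.mul_apply]
    have hterm : ∀ b : Fin (k+1), M a b * B b l
        = q ^ ((((a:ℤ) - k)^2 - ((l:ℤ) - k)^2)) * ((P l).coeff (b : ℕ) * (x a) ^ (b : ℕ)) := by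
      intro b
      have hxa : (x a) ^ (b : ℕ) = q ^ ((2 * ((a:ℤ) - k)) * (b : ℕ)) := by
        rw [hx]
        show (ynode k q (a : ℕ)) ^ (b : ℕ) = _
        unfold ynode
        rw [← zpow_natCast (q ^ (2 * ((a:ℕ) - (k:ℤ)))) (b : ℕ), ← zpow_mul]
      have hzp : q ^ (((a:ℤ) + (b:ℤ) - k)^2) * (q ^ (-((b:ℤ))^2) * q ^ (-(((l:ℤ) - k)^2)))
          = q ^ ((((a:ℤ) - k)^2 - ((l:ℤ) - k)^2)) * q ^ ((2 * ((a:ℤ) - k)) * (b : ℕ)) := by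
        rw [← zpow_add₀ hqne, ← zpow_add₀ hqne, ← zpow_add₀ hqne]
        congr 1
        push_cast
        ring
      calc M a b * B b l
          = q ^ (((a:ℤ) + (b:ℤ) - k)^2) * (q ^ (-((b:ℤ))^2) * (P l).coeff (b : ℕ) * q ^ (-(((l:ℤ) - k)^2))) := rfl
        _ = q ^ (((a:ℤ) + (b:ℤ) - k)^2) * (q ^ (-((b:ℤ))^2) * q ^ (-(((l:ℤ) - k)^2))) * (P l).coeff (b : ℕ) := by ring
        _ = q ^ ((((a:ℤ) - k)^2 - ((l:ℤ) - k)^2)) * q ^ ((2 * ((a:ℤ) - k)) * (b : ℕ)) * (P l).coeff (b : ℕ) := by rw [hzp]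
        _ = q ^ ((((a:ℤ) - k)^2 - ((l:ℤ) - k)^2)) * ((P l).coeff (b : ℕ) * (x a) ^ (b : ℕ)) := by
            rw [hxa]; ring
    rw [Finset.sum_congr rfl (fun b _ => hterm b), ← Finset.mul_sum]
    have hsum : ∑ b : Fin (k+1), (P l).coeff (b : ℕ) * (x a) ^ (b : ℕ) = (P l).eval (x a) := by
      rw [Polynomial.eval_eq_sum_range' (hdeg l) (x a)]
      exact Fin.sum_univ_eq_sum_range (fun n => (P l).coeff n * (x a) ^ n) (k+1)
    rw [hsum]
    by_cases hal : a = l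
    · subst hal
      rw [hP]
      show q ^ _ * (Lagrange.basis Finset.univ x a).eval (x a) = (1 : Matrix (Fin (k+1)) (Fin (k+1)) ℝ) a a
      rw [Lagrange.eval_basis_self hinjOn (Finset.mem_univ a), Matrix.one_apply_eq, mul_one,
        sub_self, zpow_zero]
    · rw [hP]
      show q ^ _ * (Lagrange.basis Finset.univ x l).eval (x a) = (1 : Matrix (Fin (k+1)) (Fin (k+1)) ℝ) a l
      rw [Lagrange.eval_basis_of_ne (fun h => hal (h.symm ▸ rfl) : l ≠ a) (Finset.mem_univ a),
        Matrix.one_apply_ne hal, mul_zero]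
  have hInv : M⁻¹ = B := Matrix.inv_eq_right_inv hMB
  rw [hInv]
  -- now bound |B i j|
  have hik : (i : ℕ) ≤ k := by omega
  have hjk : (j : ℕ) ≤ k := by omega
  set r : ℕ := k - (i : ℕ) with hr
  -- coefficient factorization
  have hfact : (P j).coeff (i : ℕ)
      = (∏ m ∈ Finset.univ.erase j, (x j - x m)⁻¹)
        * (∏ m ∈ Finset.univ.erase j, (X - C (x m))).coeff (i : ℕ) := by
    have : P j = C (∏ m ∈ Finset.univ.erase j, (x j - x m)⁻¹)
        * ∏ m ∈ Finset.univ.erase j, (X - C (x m)) := by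
      rw [hP]
      show Lagrange.basis Finset.univ x j = _
      rw [Lagrange.basis, map_prod]
      rw [← Finset.prod_mul_distrib]
      refine Finset.prod_congr rfl fun m _ => ?_
      rfl
    rw [this, Polynomial.coeff_C_mul]
  have habs : |B i j| = q ^ (-((i:ℤ))^2) *
      ((∏ m ∈ Finset.univ.erase j, |x j - x m|)⁻¹
        * |(∏ m ∈ Finset.univ.erase j, (X - C (x m))).coeff (i : ℕ)|)
      * q ^ (-(((j:ℤ) - k)^2)) := by
    rw [hB]
    show |q ^ (-((i:ℤ))^2) * (P j).coeff (i:ℕ) * q ^ (-(((j:ℤ) - k)^2))| = _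
    rw [hfact, abs_mul, abs_mul, abs_mul, abs_of_pos (zpow_pos hq0 _), abs_of_pos (zpow_pos hq0 _)]
    have habsinv : |∏ m ∈ Finset.univ.erase j, (x j - x m)⁻¹|
        = (∏ m ∈ Finset.univ.erase j, |x j - x m|)⁻¹ := by
      rw [Finset.abs_prod, ← Finset.prod_inv_distrib]
      exact Finset.prod_congr rfl fun m _ => abs_inv _
    rw [habsinv]
  -- numerator bound
  have hnum := num_bound (k := k) (q := q) hq i j
  -- denominator
  have hden := den_eq (k := k) (q := q) hq j
  -- positivity of the Icc products
  have hfacpos : ∀ d : ℕ, 1 ≤ d → (0:ℝ) < 1 - q ^ (-2 * (d:ℤ)) := by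
    intro d hd
    have : q ^ (-2 * (d:ℤ)) < q ^ (0:ℤ) := zpow_lt_zpow_right₀ hq (by omega)
    rw [zpow_zero] at this
    linarith
  have hP1pos : (0:ℝ) < ∏ d ∈ Finset.Icc 1 (j:ℕ), (1 - q ^ (-2 * (d:ℤ))) :=
    Finset.prod_pos fun d hd => hfacpos d (Finset.mem_Icc.mp hd).1
  have hP2pos : (0:ℝ) < ∏ d ∈ Finset.Icc 1 (k - (j:ℕ)), (1 - q ^ (-2 * (d:ℤ))) :=
    Finset.prod_pos fun d hd => hfacpos d (Finset.mem_Icc.mp hd).1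
  have hPkpos : (0:ℝ) < ∏ d ∈ Finset.Icc 1 k, (1 - q ^ (-2 * (d:ℤ))) :=
    Finset.prod_pos fun d hd => hfacpos d (Finset.mem_Icc.mp hd).1
  -- gaussian binomial bound
  have hgauss : ∏ d ∈ Finset.Icc 1 k, (1 - q ^ (-2 * (d:ℤ)))
      ≤ (k.choose (j:ℕ) : ℝ) * ((∏ d ∈ Finset.Icc 1 (j:ℕ), (1 - q ^ (-2 * (d:ℤ))))
        * ∏ d ∈ Finset.Icc 1 (k - (j:ℕ)), (1 - q ^ (-2 * (d:ℤ)))) := by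
    have ht0 : (0:ℝ) ≤ q ^ (-2 : ℤ) := le_of_lt (zpow_pos hq0 _)
    have ht1 : q ^ (-2 : ℤ) ≤ 1 := zpow_le_one_of_nonpos₀ hq.le (by omega)
    have hpow : ∀ d : ℕ, (q ^ (-2 : ℤ)) ^ d = q ^ (-2 * (d:ℤ)) := fun d => by
      rw [← zpow_natCast (q ^ (-2:ℤ)) d, ← zpow_mul]
    have := gauss_bound ht0 ht1 k (j : ℕ) hjk
    simpa only [hpow] using this
  -- notation
  have hxdef : ∀ m : Fin (k+1), ynode k q (m : ℕ) = x m := fun m => rfl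
  simp only [hxdef] at hnum hden
  set σ : ℤ := (j:ℤ) * ((j:ℤ) - 1) - (k:ℤ) * ((k:ℤ) - 1) with hσ
  set P1 : ℝ := ∏ d ∈ Finset.Icc 1 (j:ℕ), (1 - q ^ (-2 * (d:ℤ))) with hP1
  set P2 : ℝ := ∏ d ∈ Finset.Icc 1 (k - (j:ℕ)), (1 - q ^ (-2 * (d:ℤ))) with hP2
  set Pk : ℝ := ∏ d ∈ Finset.Icc 1 k, (1 - q ^ (-2 * (d:ℤ))) with hPk
  have h12pos : (0:ℝ) < P1 * P2 := mul_pos hP1pos hP2pos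
  have hinvD : (∏ m ∈ Finset.univ.erase j, |x j - x m|)⁻¹ = q ^ (-σ) * (P1 * P2)⁻¹ := by
    rw [hden, mul_inv, zpow_neg]
  have hP12inv : (P1 * P2)⁻¹ ≤ (k.choose (j:ℕ) : ℝ) / Pk := by
    have hdivle : Pk / (P1 * P2) ≤ (k.choose (j:ℕ) : ℝ) :=
      (div_le_iff₀ h12pos).mpr (by linarith [hgauss])
    calc (P1 * P2)⁻¹ = (Pk / (P1 * P2)) / Pk := by
          field_simp
        _ ≤ (k.choose (j:ℕ) : ℝ) / Pk := by gcongr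
  have hone : q ^ (-((i:ℤ))^2) * q ^ (-(((k - (i:ℕ)) * (k - (i:ℕ) - 1) : ℕ) : ℤ))
      * q ^ (-(((j:ℤ) - k)^2)) * q ^ (-σ) ≤ 1 := by
    rw [← zpow_add₀ hqne, ← zpow_add₀ hqne, ← zpow_add₀ hqne]
    apply zpow_le_one_of_nonpos₀ hq.le
    have hcast : (((k - (i:ℕ)) * (k - (i:ℕ) - 1) : ℕ) : ℤ)
        = ((k:ℤ) - (i:ℕ)) * ((k:ℤ) - (i:ℕ) - 1) := by
      rcases Nat.eq_zero_or_pos (k - (i:ℕ)) with h0 | hpos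
      · rw [h0]
        have : (k:ℤ) - (i:ℕ) = 0 := by omega
        simp [this]
      · have h1 : ((k - (i:ℕ) : ℕ) : ℤ) = (k:ℤ) - (i:ℕ) := by omega
        have h2 : ((k - (i:ℕ) - 1 : ℕ) : ℤ) = (k:ℤ) - (i:ℕ) - 1 := by omega
        rw [Nat.cast_mul, h1, h2]
    rw [hcast, hσ]
    have hsq := int_sq_add_self_nonneg ((i:ℤ) - (j:ℤ))
    have hsq2 := sq_nonneg ((i:ℤ) + (j:ℤ) - k)
    have hii : ((i:ℕ) : ℤ) = (i:ℤ) := rfl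
    have hjj : ((j:ℕ) : ℤ) = (j:ℤ) := rfl
    rw [hii]
    nlinarith [hsq, hsq2]
  have hNnonneg : (0:ℝ) ≤ (k.choose (i:ℕ) : ℝ) * q ^ (-(((k - (i:ℕ)) * (k - (i:ℕ) - 1) : ℕ) : ℤ)) :=
    mul_nonneg (Nat.cast_nonneg _) (le_of_lt (zpow_pos hq0 _))
  have habs_final : |B i j| ≤ ((k.choose (i:ℕ) : ℝ) * (k.choose (j:ℕ) : ℝ)) / Pk := by
    calc |B i j| = q ^ (-((i:ℤ))^2) *
          ((∏ m ∈ Finset.univ.erase j, |x j - x m|)⁻¹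
            * |(∏ m ∈ Finset.univ.erase j, (X - C (x m))).coeff (i : ℕ)|)
          * q ^ (-(((j:ℤ) - k)^2)) := habs
      _ = q ^ (-((i:ℤ))^2) * ((q ^ (-σ) * (P1 * P2)⁻¹)
            * |(∏ m ∈ Finset.univ.erase j, (X - C (x m))).coeff (i : ℕ)|)
          * q ^ (-(((j:ℤ) - k)^2)) := by rw [hinvD]
      _ ≤ q ^ (-((i:ℤ))^2) * ((q ^ (-σ) * (P1 * P2)⁻¹)
            * ((k.choose (i:ℕ) : ℝ) * q ^ (-(((k - (i:ℕ)) * (k - (i:ℕ) - 1) : ℕ) : ℤ))))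
          * q ^ (-(((j:ℤ) - k)^2)) := by
          apply mul_le_mul_of_nonneg_right _ (le_of_lt (zpow_pos hq0 (-(((j:ℤ) - k)^2))))
          apply mul_le_mul_of_nonneg_left _ (le_of_lt (zpow_pos hq0 (-((i:ℤ))^2)))
          exact mul_le_mul_of_nonneg_left hnum
            (mul_nonneg (le_of_lt (zpow_pos hq0 _)) (le_of_lt (inv_pos.mpr h12pos)))
      _ = ((k.choose (i:ℕ) : ℝ) * (q ^ (-((i:ℤ))^2) * q ^ (-(((k - (i:ℕ)) * (k - (i:ℕ) - 1) : ℕ) : ℤ))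
            * q ^ (-(((j:ℤ) - k)^2)) * q ^ (-σ))) * (P1 * P2)⁻¹ := by ring
      _ ≤ ((k.choose (i:ℕ) : ℝ) * (q ^ (-((i:ℤ))^2) * q ^ (-(((k - (i:ℕ)) * (k - (i:ℕ) - 1) : ℕ) : ℤ))
            * q ^ (-(((j:ℤ) - k)^2)) * q ^ (-σ))) * ((k.choose (j:ℕ) : ℝ) / Pk) := by
          apply mul_le_mul_of_nonneg_left hP12inv
          positivity
      _ = ((k.choose (i:ℕ) : ℝ) * ((k.choose (j:ℕ) : ℝ) / Pk)) * (q ^ (-((i:ℤ))^2) * q ^ (-(((k - (i:ℕ)) * (k - (i:ℕ) - 1) : ℕ) : ℤ))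
            * q ^ (-(((j:ℤ) - k)^2)) * q ^ (-σ)) := by ring
      _ ≤ ((k.choose (i:ℕ) : ℝ) * ((k.choose (j:ℕ) : ℝ) / Pk)) * 1 := by
          apply mul_le_mul_of_nonneg_left hone
          positivity
      _ = ((k.choose (i:ℕ) : ℝ) * (k.choose (j:ℕ) : ℝ)) / Pk := by ring
  have hPkeq : ∏ b ∈ Finset.Icc 1 k, (1 - q ^ (-(2 * (b:ℤ)))) = Pk := by
    rw [hPk]
    exact Finset.prod_congr rfl fun b _ => by rw [neg_mul]
  rw [hPkeq]
  push_cast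
  exact habs_final
end

section
/- Let h : ℝ → ℝ be differentiable with |h'(x)| ≤ L for all x, and suppose |h(a)| ≥ ε for some a ∈ ℝ and ε > 0. Then the interval I = [a - ε/L, a + ε/L] satisfies |∫_I h(x) dx| ≥ ε²/L. -/
set_option linter.unnecessarySimpa false

lemma abs_integral (a r : ℝ) (hr : 0 ≤ r) :
    (∫ x in (a - r)..(a + r), |x - a|) = r ^ 2 := by
  have h1 : (∫ x in (a - r)..(a + r), |x - a|)
      = ∫ x in (-r)..r, |x| := by
    have := intervalIntegral.integral_comp_sub_right (a := a - r) (b := a + r)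
      (fun x => |x|) a
    simpa using this
  rw [h1]
  have hsplit : (∫ x in (-r)..(0:ℝ), |x|) + (∫ x in (0:ℝ)..r, |x|)
      = ∫ x in (-r)..r, |x| :=
    intervalIntegral.integral_add_adjacent_intervals
      (continuous_abs.intervalIntegrable _ _) (continuous_abs.intervalIntegrable _ _)
  rw [← hsplit]
  have hneg : (∫ x in (-r)..(0:ℝ), |x|) = ∫ x in (-r)..(0:ℝ), -x := by
    apply intervalIntegral.integral_congr
    intro x hx
    rw [Set.uIcc_of_le (by linarith)] at hx
    exact abs_of_nonpos hx.2
  have hpos : (∫ x in (0:ℝ)..r, |x|) = ∫ x in (0:ℝ)..r, x := by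
    apply intervalIntegral.integral_congr
    intro x hx
    rw [Set.uIcc_of_le hr] at hx
    exact abs_of_nonneg hx.1
  rw [hneg, hpos, intervalIntegral.integral_neg, integral_id, integral_id]
  ring

lemma aux (h : ℝ → ℝ) (hdiff : Differentiable ℝ h) (L : ℝ) (hL : 0 < L)
    (hderiv : ∀ x, |deriv h x| ≤ L) (a ε : ℝ) (hε : 0 < ε) (ha : ε ≤ h a) :
    ε ^ 2 / L ≤ ∫ x in (a - ε / L)..(a + ε / L), h x := by
  set r := ε / L with hrdef
  have hr : 0 < r := div_pos hε hL
  have hlip : ∀ x, |h x - h a| ≤ L * |x - a| := by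
    intro x
    have := Convex.norm_image_sub_le_of_norm_deriv_le (f := h)
      (fun y _ => hdiff y)
      (fun y _ => hderiv y) convex_univ (Set.mem_univ a) (Set.mem_univ x)
    simpa [Real.norm_eq_abs] using this
  have hge : ∀ x ∈ Set.Icc (a - r) (a + r), ε - L * |x - a| ≤ h x := by
    intro x _
    have := hlip x
    have := abs_le.mp this
    linarith [this.1]
  have hmono : (∫ x in (a - r)..(a + r), (ε - L * |x - a|))
      ≤ ∫ x in (a - r)..(a + r), h x := by
    apply intervalIntegral.integral_mono_on (by linarith)
    · exact (Continuous.intervalIntegrable (by continuity) _ _)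
    · exact hdiff.continuous.intervalIntegrable _ _
    · exact hge
  have hcalc : (∫ x in (a - r)..(a + r), (ε - L * |x - a|)) = ε ^ 2 / L := by
    rw [intervalIntegral.integral_sub (Continuous.intervalIntegrable (by continuity) _ _)
      (Continuous.intervalIntegrable (by continuity) _ _),
      intervalIntegral.integral_const_mul, abs_integral a r hr.le,
      intervalIntegral.integral_const]
    rw [hrdef]
    field_simp
    rw [smul_eq_mul, ← mul_assoc, mul_div_cancel₀ _ hL.ne']
    ring
  linarith

/-- If `h` is differentiable with `|h'| ≤ L` and `|h(a)| ≥ ε`, then the integral of `h`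
over the interval `[a - ε/L, a + ε/L]` has absolute value at least `ε²/L`. -/
theorem stmt_19 (h : ℝ → ℝ) (hdiff : Differentiable ℝ h) (L : ℝ) (hL : 0 < L)
    (hderiv : ∀ x, |deriv h x| ≤ L) (a ε : ℝ) (hε : 0 < ε) (ha : ε ≤ |h a|) :
    ε ^ 2 / L ≤ |∫ x in (a - ε / L)..(a + ε / L), h x| := by
  rcases le_abs.mp ha with hpos | hneg
  · exact le_trans (aux h hdiff L hL hderiv a ε hε hpos) (le_abs_self _)
  · have hd : Differentiable ℝ (fun x => -h x) := hdiff.neg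
    have hd' : ∀ x, |deriv (fun x => -h x) x| ≤ L := by
      intro x
      rw [deriv.fun_neg, abs_neg]
      exact hderiv x
    have := aux (fun x => -h x) hd L hL hd' a ε hε (by simpa using hneg)
    rw [intervalIntegral.integral_neg] at this
    calc ε ^ 2 / L ≤ -∫ x in (a - ε / L)..(a + ε / L), h x := this
      _ ≤ |∫ x in (a - ε / L)..(a + ε / L), h x| := neg_le_abs _
end
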